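/- arXiv:1508.01739 — 7 statements merged into one kernel-verified Lean document; each statement's English description precedes it below -/
import Mathlib

section
/- Let (X, μ) be a probability space and f, g ∈ L∞(X,μ)⁺ with f ≤ g almost everywhere. Then f* ≤ g* pointwise on [0,1); moreover, if f* = g* (as functions on [0,1)) then f = g almost everywhere. -/
open MeasureTheory Set

/-- The decreasing rearrangement `f*(s) = sup { t ≥ 0 : μ{x : f x > t} > s }`. -/
noncomputable def decRearr {X : Type*} [MeasurableSpace X] (μ : Measure X)
    (f : X → ℝ) (s : ℝ) : ℝ :=
  sSup {t : ℝ | 0 ≤ t ∧ ENNReal.ofReal s < μ {x | t < f x}}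

theorem decRearr_mono_and_strict {X : Type*} [MeasurableSpace X]
    (μ : Measure X) [IsProbabilityMeasure μ] (f g : X → ℝ)
    (hfm : Measurable f) (hgm : Measurable g)
    (hf0 : ∀ᵐ x ∂μ, 0 ≤ f x) (hg0 : ∀ᵐ x ∂μ, 0 ≤ g x)
    (hfb : ∃ C, ∀ᵐ x ∂μ, f x ≤ C) (hgb : ∃ C, ∀ᵐ x ∂μ, g x ≤ C)
    (hfg : ∀ᵐ x ∂μ, f x ≤ g x) :
    (∀ s ∈ Ico (0:ℝ) 1, decRearr μ f s ≤ decRearr μ g s) ∧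
      ((∀ s ∈ Ico (0:ℝ) 1, decRearr μ f s = decRearr μ g s) → f =ᵐ[μ] g) := by
  classical
  -- Abbreviation for the defining sets
  set A : (X → ℝ) → ℝ → Set ℝ :=
    fun h s => {t : ℝ | 0 ≤ t ∧ ENNReal.ofReal s < μ {x | t < h x}} with hA
  -- boundedness of the defining sets
  have hbdd : ∀ (h : X → ℝ), (∃ C, ∀ᵐ x ∂μ, h x ≤ C) → ∀ s, BddAbove (A h s) := by
    rintro h ⟨C, hC⟩ s
    refine ⟨max C 0, fun t ht => ?_⟩
    by_contra hlt
    push_neg at hlt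
    have hnull : μ {x | t < h x} = 0 := by
      refine measure_mono_null_ae ?_ (by simpa [ae_iff] using hC)
      filter_upwards with x hx
      exact lt_trans (lt_of_le_of_lt (le_max_left _ _) hlt) hx
    have := ht.2
    rw [hnull] at this
    simp at this
  have hbddf := hbdd f hfb
  have hbddg := hbdd g hgb
  -- nonnegativity of decRearr
  have hnonneg : ∀ (h : X → ℝ), (∀ s, BddAbove (A h s)) → ∀ s, 0 ≤ decRearr μ h s := by
    intro h hb s
    by_cases hne : (A h s).Nonempty
    · obtain ⟨t, ht⟩ := hne
      exact ht.1.trans (le_csSup (hb s) ht)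
    · rw [Set.not_nonempty_iff_eq_empty] at hne
      simp only [decRearr]
      rw [show {t : ℝ | 0 ≤ t ∧ ENNReal.ofReal s < μ {x | t < h x}} = A h s from rfl, hne,
        Real.sSup_empty]
  have hfnn := hnonneg f hbddf
  have hgnn := hnonneg g hbddg
  -- A f s ⊆ A g s
  have hsub : ∀ s, A f s ⊆ A g s := by
    intro s t ht
    refine ⟨ht.1, lt_of_lt_of_le ht.2 (measure_mono_ae ?_)⟩
    filter_upwards [hfg] with x hx hx2
    exact lt_of_lt_of_le hx2 hx
  -- Part 1 : monotonicity
  have part1 : ∀ s ∈ Ico (0:ℝ) 1, decRearr μ f s ≤ decRearr μ g s := by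
    intro s _
    by_cases hne : (A f s).Nonempty
    · exact csSup_le_csSup (hbddg s) hne (hsub s)
    · rw [Set.not_nonempty_iff_eq_empty] at hne
      have : decRearr μ f s = 0 := by
        simp only [decRearr]
        rw [show {t : ℝ | 0 ≤ t ∧ ENNReal.ofReal s < μ {x | t < f x}} = A f s from rfl, hne,
          Real.sSup_empty]
      rw [this]; exact hgnn s
  refine ⟨part1, fun heq => ?_⟩
  -- basic properties of decRearr
  have hmem : ∀ (h : X → ℝ), (∀ s, BddAbove (A h s)) → ∀ s t, 0 ≤ t →
      ENNReal.ofReal s < μ {x | t < h x} → t ≤ decRearr μ h s := by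
    intro h hb s t ht1 ht2
    exact le_csSup (hb s) ⟨ht1, ht2⟩
  have hlt : ∀ (h : X → ℝ), ∀ s t, 0 < t → t < decRearr μ h s →
      ENNReal.ofReal s < μ {x | t < h x} := by
    intro h s t ht0 htlt
    have hne : (A h s).Nonempty := by
      by_contra hne
      rw [Set.not_nonempty_iff_eq_empty] at hne
      have : decRearr μ h s = 0 := by
        simp only [decRearr]
        rw [show {t : ℝ | 0 ≤ t ∧ ENNReal.ofReal s < μ {x | t < h x}} = A h s from rfl, hne,
          Real.sSup_empty]
      rw [this] at htlt; linarith
    obtain ⟨t', ht', htt'⟩ := exists_lt_of_lt_csSup hne htlt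
    refine lt_of_lt_of_le ht'.2 (measure_mono ?_)
    intro x hx
    exact lt_trans htt' hx
  -- antitonicity of decRearr, hence measurability
  have hanti : ∀ (h : X → ℝ), (∀ s, BddAbove (A h s)) → Antitone (decRearr μ h) := by
    intro h hb s1 s2 hs
    by_cases hne : (A h s2).Nonempty
    · refine csSup_le_csSup (hb s1) hne ?_
      intro t ht
      exact ⟨ht.1, lt_of_le_of_lt (ENNReal.ofReal_le_ofReal hs) ht.2⟩
    · rw [Set.not_nonempty_iff_eq_empty] at hne
      have : decRearr μ h s2 = 0 := by
        simp only [decRearr]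
        rw [show {t : ℝ | 0 ≤ t ∧ ENNReal.ofReal s2 < μ {x | t < h x}} = A h s2 from rfl, hne,
          Real.sSup_empty]
      rw [this]
      exact hnonneg h hb s1
  have hfstar_m : Measurable (decRearr μ f) := (hanti f hbddf).measurable
  have hgstar_m : Measurable (decRearr μ g) := (hanti g hbddg).measurable
  -- the restricted Lebesgue measure on [0,1)
  set ν : Measure ℝ := volume.restrict (Ico (0:ℝ) 1) with hν
  -- equimeasurability sandwich
  have key : ∀ (h : X → ℝ), Measurable h → (∀ᵐ x ∂μ, 0 ≤ h x) → (∀ s, BddAbove (A h s)) →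
      ∫⁻ x, ENNReal.ofReal (h x) ∂μ = ∫⁻ s, ENNReal.ofReal (decRearr μ h s) ∂ν := by
    intro h hm h0 hb
    have hstar_m : Measurable (decRearr μ h) := (hanti h hb).measurable
    have hstar_nn : (0:ℝ → ℝ) ≤ᵐ[ν] decRearr μ h :=
      Filter.Eventually.of_forall (hnonneg h hb)
    -- from f-side layer cake
    have lc1 : ∫⁻ x, ENNReal.ofReal (h x) ∂μ = ∫⁻ t in Ioi 0, μ {x | t < h x} :=
      lintegral_eq_lintegral_meas_lt μ h0 hm.aemeasurable
    have lc2 : ∫⁻ s, ENNReal.ofReal (decRearr μ h s) ∂ν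
        = ∫⁻ t in Ioi 0, ν {s | t < decRearr μ h s} :=
      lintegral_eq_lintegral_meas_lt ν hstar_nn hstar_m.aemeasurable
    have lc3 : ∫⁻ s, ENNReal.ofReal (decRearr μ h s) ∂ν
        = ∫⁻ t in Ioi 0, ν {s | t ≤ decRearr μ h s} :=
      lintegral_eq_lintegral_meas_le ν hstar_nn hstar_m.aemeasurable
    -- pointwise sandwich for t > 0
    have hfin : ∀ t : ℝ, μ {x | t < h x} ≠ ⊤ := fun t => measure_ne_top μ _
    have hle1 : ∀ t : ℝ, 0 < t → ν {s | t < decRearr μ h s} ≤ μ {x | t < h x} := by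
      intro t ht
      set m := μ {x | t < h x} with hm'
      have hS : MeasurableSet {s : ℝ | t < decRearr μ h s} :=
        measurableSet_lt measurable_const hstar_m
      rw [hν, Measure.restrict_apply hS]
      have hsub2 : {s : ℝ | t < decRearr μ h s} ∩ Ico (0:ℝ) 1 ⊆ Ico (0:ℝ) m.toReal := by
        rintro s ⟨hs1, hs2, _⟩
        refine ⟨hs2, ?_⟩
        have := hlt h s t ht hs1
        exact (ENNReal.ofReal_lt_iff_lt_toReal hs2 (hfin t)).mp this
      calc volume ({s : ℝ | t < decRearr μ h s} ∩ Ico (0:ℝ) 1)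
          ≤ volume (Ico (0:ℝ) m.toReal) := measure_mono hsub2
        _ = ENNReal.ofReal (m.toReal - 0) := Real.volume_Ico
        _ = m := by rw [sub_zero, ENNReal.ofReal_toReal (hfin t)]
    have hle2 : ∀ t : ℝ, 0 < t → μ {x | t < h x} ≤ ν {s | t ≤ decRearr μ h s} := by
      intro t ht
      set m := μ {x | t < h x} with hm'
      have hS : MeasurableSet {s : ℝ | t ≤ decRearr μ h s} :=
        measurableSet_le measurable_const hstar_m
      rw [hν, Measure.restrict_apply hS]
      have hm1 : m ≤ 1 := by
        calc m ≤ μ Set.univ := measure_mono (subset_univ _)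
          _ = 1 := measure_univ
      have hmt1 : m.toReal ≤ 1 := by
        simpa using ENNReal.toReal_mono (by simp) hm1
      have hsub2 : Ico (0:ℝ) m.toReal ⊆ {s : ℝ | t ≤ decRearr μ h s} ∩ Ico (0:ℝ) 1 := by
        rintro s ⟨hs0, hs1⟩
        have hofr : ENNReal.ofReal s < m :=
          (ENNReal.ofReal_lt_iff_lt_toReal hs0 (hfin t)).mpr hs1
        exact ⟨hmem h hb s t ht.le hofr, hs0, lt_of_lt_of_le hs1 hmt1⟩
      calc m = ENNReal.ofReal (m.toReal - 0) := by
              rw [sub_zero, ENNReal.ofReal_toReal (hfin t)]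
        _ = volume (Ico (0:ℝ) m.toReal) := Real.volume_Ico.symm
        _ ≤ volume ({s : ℝ | t ≤ decRearr μ h s} ∩ Ico (0:ℝ) 1) := measure_mono hsub2
    refine le_antisymm ?_ ?_
    · rw [lc1, lc3]
      refine lintegral_mono_ae ?_
      filter_upwards [self_mem_ae_restrict measurableSet_Ioi] with t ht
      exact hle2 t ht
    · rw [lc1, lc2]
      refine lintegral_mono_ae ?_
      filter_upwards [self_mem_ae_restrict measurableSet_Ioi] with t ht
      exact hle1 t ht
  -- equal rearrangements give equal integrals
  have hkf := key f hfm hf0 hbddf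
  have hkg := key g hgm hg0 hbddg
  have hsame : ∫⁻ s, ENNReal.ofReal (decRearr μ f s) ∂ν
      = ∫⁻ s, ENNReal.ofReal (decRearr μ g s) ∂ν := by
    refine lintegral_congr_ae ?_
    filter_upwards [self_mem_ae_restrict measurableSet_Ico] with s hs
    rw [heq s hs]
  have hint : ∫⁻ x, ENNReal.ofReal (f x) ∂μ = ∫⁻ x, ENNReal.ofReal (g x) ∂μ := by
    rw [hkf, hkg, hsame]
  -- finiteness
  obtain ⟨C, hC⟩ := hfb
  have hfin : ∫⁻ x, ENNReal.ofReal (f x) ∂μ ≠ ⊤ := by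
    have : ∫⁻ x, ENNReal.ofReal (f x) ∂μ ≤ ∫⁻ _, ENNReal.ofReal C ∂μ := by
      refine lintegral_mono_ae ?_
      filter_upwards [hC] with x hx
      exact ENNReal.ofReal_le_ofReal hx
    refine ne_top_of_le_ne_top ?_ this
    rw [lintegral_const, measure_univ, mul_one]
    exact ENNReal.ofReal_ne_top
  have hae : (fun x => ENNReal.ofReal (f x)) =ᵐ[μ] fun x => ENNReal.ofReal (g x) := by
    refine ae_eq_of_ae_le_of_lintegral_le ?_ hfin
      (ENNReal.measurable_ofReal.comp hgm).aemeasurable hint.ge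
    filter_upwards [hfg] with x hx
    exact ENNReal.ofReal_le_ofReal hx
  filter_upwards [hae, hf0, hg0] with x hx hx0 hx0'
  exact (ENNReal.ofReal_eq_ofReal_iff hx0 hx0').mp hx
end

section
/- Let (X, μ) be a probability space and f, g ∈ L∞(X,μ)⁺ with g ≺_w f. If there exists a non-decreasing strictly convex function φ : ℝ⁺ → ℝ⁺ such that ∫_X φ(f) dμ = ∫_X φ(g) dμ, then g* = f* on [0,1). -/
open MeasureTheory Set

/-- `g ≺_w f` : `f` submajorizes `g`. -/
def Submajorizes {X : Type*} [MeasurableSpace X] (μ : Measure X)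
    (f g : X → ℝ) : Prop :=
  ∀ s ∈ Icc (0:ℝ) 1, ∫ t in (0:ℝ)..s, decRearr μ g t ≤ ∫ t in (0:ℝ)..s, decRearr μ f t

/-!
Put `F = f*`, `G = g*` on `(0, 1]`; they have the same distributions as `f`, `g`, so
`∫ φ ∘ F = ∫ φ ∘ G`. With `k = φ'₊ ∘ G`, which is antitone, the supporting lines of `φ` give
`φ ∘ F - φ ∘ G ≥ k (F - G)`, strictly where `F ≠ G`. Abel summation against the antitone weight
`k` turns `∫₀ˢ (F - G) ≥ 0` into `∫ k (F - G) ≥ 0`, so this gap integrates to zero and `F = G`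
a.e. Both rearrangements are antitone and lower semicontinuous, so they agree on all of `[0, 1)`.
-/

open Filter Topology

section DecreasingRearrangement

variable {X : Type*} [MeasurableSpace X] {μ : Measure X} {f : X → ℝ} {C s t : ℝ}

lemma decRearr_nonneg (μ : Measure X) (f : X → ℝ) (s : ℝ) : 0 ≤ decRearr μ f s :=
  Real.sSup_nonneg fun _ ht => ht.1

lemma decRearr_bddAbove (hfC : ∀ᵐ x ∂μ, f x ≤ C) (s : ℝ) :
    BddAbove {t : ℝ | 0 ≤ t ∧ ENNReal.ofReal s < μ {x | t < f x}} := by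
  refine ⟨C, fun t ht => le_of_not_gt fun hCt => (pos_of_gt ht.2).ne' ?_⟩
  exact measure_eq_zero_iff_ae_notMem.2 (hfC.mono fun x hx hlt => (hCt.trans hlt).not_ge hx)

lemma antitone_decRearr (hfC : ∀ᵐ x ∂μ, f x ≤ C) : Antitone (decRearr μ f) :=
  fun s _ hss' => Real.sSup_le (fun _ ht => le_csSup (decRearr_bddAbove hfC s)
    ⟨ht.1, (ENNReal.ofReal_le_ofReal hss').trans_lt ht.2⟩) (decRearr_nonneg μ f s)

lemma lt_decRearr_iff (hfC : ∀ᵐ x ∂μ, f x ≤ C) (ht : 0 ≤ t) :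
    t < decRearr μ f s ↔ ENNReal.ofReal s < μ {x | t < f x} := by
  constructor
  · contrapose!
    intro h
    refine Real.sSup_le (fun t' ht' => le_of_not_gt fun htt' => ?_) ht
    exact (ht'.2.trans_le (measure_mono fun x hx => htt'.trans hx)).not_ge h
  · intro h
    have hmono : Monotone fun n : ℕ => {x | t + 1 / (n + 1) < f x} :=
      fun _ _ hmn _ hx => (add_le_add_right (Nat.one_div_le_one_div hmn) t).trans_lt hx
    have hunion : {x | t < f x} = ⋃ n : ℕ, {x | t + 1 / (n + 1) < f x} := by
      ext x
      simp only [mem_ofPred_eq, mem_iUnion]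
      refine ⟨fun hx => ?_, fun ⟨n, hn⟩ => lt_of_le_of_lt (by simp; positivity) hn⟩
      obtain ⟨n, hn⟩ := exists_nat_one_div_lt (sub_pos.2 hx)
      exact ⟨n, by linarith⟩
    rw [hunion, hmono.measure_iUnion, lt_iSup_iff] at h
    obtain ⟨n, hn⟩ := h
    exact (lt_add_of_pos_right t Nat.one_div_pos_of_nat).trans_le
      (le_csSup (decRearr_bddAbove hfC s) ⟨by positivity, hn⟩)

lemma lowerSemicontinuous_decRearr (hfC : ∀ᵐ x ∂μ, f x ≤ C) :
    LowerSemicontinuous (decRearr μ f) := by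
  intro s t (hts : t < decRearr μ f s)
  rcases lt_or_ge t 0 with ht | ht
  · exact Eventually.of_forall fun s' => ht.trans_le (decRearr_nonneg μ f s')
  · rw [lt_decRearr_iff hfC ht] at hts
    filter_upwards [ENNReal.continuous_ofReal.continuousAt.eventually_lt continuousAt_const hts]
      with s' hs' using (lt_decRearr_iff hfC ht).2 hs'

lemma map_decRearr [IsProbabilityMeasure μ] (hf : AEMeasurable f μ) (hf0 : ∀ᵐ x ∂μ, 0 ≤ f x)
    (hfC : ∀ᵐ x ∂μ, f x ≤ C) :
    (volume.restrict (Ioc 0 1)).map (decRearr μ f) = μ.map f := by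
  have hF := (antitone_decRearr hfC).measurable
  have : IsProbabilityMeasure (volume.restrict (Ioc (0 : ℝ) 1)) := ⟨by simp⟩
  have := Measure.isProbabilityMeasure_map (μ := volume.restrict (Ioc (0 : ℝ) 1)) hF.aemeasurable
  have := Measure.isProbabilityMeasure_map hf
  have hIoi (t : ℝ) : (volume.restrict (Ioc 0 1)).map (decRearr μ f) (Ioi t) = μ.map f (Ioi t) := by
    rw [Measure.map_apply hF measurableSet_Ioi,
      Measure.map_apply_of_aemeasurable hf measurableSet_Ioi,
      Measure.restrict_apply (hF measurableSet_Ioi)]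
    rcases lt_or_ge t 0 with ht | ht
    · have hall : decRearr μ f ⁻¹' Ioi t = univ :=
        eq_univ_of_forall fun s => ht.trans_le (decRearr_nonneg μ f s)
      have hfall : f ⁻¹' Ioi t =ᵐ[μ] univ :=
        eventuallyEq_univ.2 (hf0.mono fun x hx => ht.trans_le hx)
      simp [hall, measure_congr hfall]
    · have hm : μ {x | t < f x} ≠ ⊤ := measure_ne_top μ _
      have hset : decRearr μ f ⁻¹' Ioi t ∩ Ioc 0 1 = Ioo 0 (μ {x | t < f x}).toReal := by
        ext s
        simp only [mem_inter_iff, mem_preimage, mem_Ioi, mem_Ioc, mem_Ioo, lt_decRearr_iff hfC ht]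
        constructor
        · rintro ⟨hs, hs0, -⟩
          exact ⟨hs0, (ENNReal.ofReal_lt_iff_lt_toReal hs0.le hm).1 hs⟩
        · rintro ⟨hs0, hs⟩
          refine ⟨(ENNReal.ofReal_lt_iff_lt_toReal hs0.le hm).2 hs, hs0, hs.le.trans ?_⟩
          exact ENNReal.toReal_le_of_le_ofReal zero_le_one (by simpa using prob_le_one)
      rw [hset, Real.volume_Ioo, sub_zero, ENNReal.ofReal_toReal hm]
      rfl
  refine Measure.ext_of_Iic _ _ fun t => ?_
  rw [← compl_Ioi, prob_compl_eq_one_sub measurableSet_Ioi, prob_compl_eq_one_sub measurableSet_Ioi,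
    hIoi]

lemma integral_comp_decRearr [IsProbabilityMeasure μ] (hf : AEMeasurable f μ)
    (hf0 : ∀ᵐ x ∂μ, 0 ≤ f x) (hfC : ∀ᵐ x ∂μ, f x ≤ C) {ψ : ℝ → ℝ}
    (hψ : AEStronglyMeasurable ψ (μ.map f)) :
    ∫ s in Ioc 0 1, ψ (decRearr μ f s) = ∫ x, ψ (f x) ∂μ := by
  have hmap := map_decRearr hf hf0 hfC
  rw [← integral_map hf hψ, ← hmap,
    integral_map (antitone_decRearr hfC).measurable.aemeasurable (hmap ▸ hψ)]

lemma aestronglyMeasurable_map_of_monotoneOn {ψ : ℝ → ℝ} (hf : AEMeasurable f μ)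
    (hf0 : ∀ᵐ x ∂μ, 0 ≤ f x) (hψ : MonotoneOn ψ (Ici 0)) : AEStronglyMeasurable ψ (μ.map f) := by
  have hsupp : (μ.map f).restrict (Ici 0) = μ.map f :=
    Measure.restrict_eq_self_of_ae_mem ((ae_map_iff hf measurableSet_Ici).2 hf0)
  rw [← hsupp]
  exact (aemeasurable_restrict_of_monotoneOn measurableSet_Ici hψ).aestronglyMeasurable

end DecreasingRearrangement

/-- The right derivative of a convex `φ` at `b`. Unlike `derivWithin φ (Ioi b) b`, it needs no
differentiability argument at the endpoint `b = 0` of the domain. -/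
noncomputable def rightSlope (φ : ℝ → ℝ) (b : ℝ) : ℝ :=
  sInf (slope φ b '' Ioi b)

section RightSlope

variable {φ : ℝ → ℝ} {a b : ℝ}

lemma slope_nonneg_of_monotoneOn (hφm : MonotoneOn φ (Ici 0)) (hb : 0 ≤ b) (hba : b < a) :
    0 ≤ slope φ b a := by
  rw [slope_def_field]
  exact div_nonneg (sub_nonneg.2 (hφm hb (hb.trans hba.le) hba.le)) (sub_nonneg.2 hba.le)

lemma rightSlope_nonneg (hφm : MonotoneOn φ (Ici 0)) (hb : 0 ≤ b) : 0 ≤ rightSlope φ b :=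
  le_csInf ((nonempty_Ioi).image _) (forall_mem_image.2 fun _ => slope_nonneg_of_monotoneOn hφm hb)

lemma rightSlope_le_slope (hφm : MonotoneOn φ (Ici 0)) (hb : 0 ≤ b) (hba : b < a) :
    rightSlope φ b ≤ slope φ b a :=
  csInf_le ⟨0, forall_mem_image.2 fun _ => slope_nonneg_of_monotoneOn hφm hb⟩
    (mem_image_of_mem _ hba)

lemma slope_le_rightSlope (hφ : ConvexOn ℝ (Ici 0) φ) (ha : 0 ≤ a) (hab : a < b) :
    slope φ b a ≤ rightSlope φ b := by
  have hb : 0 ≤ b := ha.trans hab.le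
  refine le_csInf ((nonempty_Ioi).image _) (forall_mem_image.2 fun y (hby : b < y) => ?_)
  exact hφ.slope_mono hb ⟨ha, hab.ne⟩ ⟨hb.trans hby.le, hby.ne'⟩ (hab.trans hby).le

lemma StrictConvexOn.slope_strictMono {s : Set ℝ} (hφ : StrictConvexOn ℝ s φ) (hb : b ∈ s) :
    StrictMonoOn (slope φ b) (s \ {b}) := by
  intro x hx y hy hxy
  simp only [slope_def_field]
  exact hφ.secant_strict_mono hb hx.1 hy.1 hx.2 hy.2 hxy

lemma slope_lt_rightSlope (hφ : StrictConvexOn ℝ (Ici 0) φ) (ha : 0 ≤ a) (hab : a < b) :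
    slope φ b a < rightSlope φ b := by
  obtain ⟨m, ham, hmb⟩ := exists_between hab
  exact (hφ.slope_strictMono (ha.trans hab.le) ⟨ha, hab.ne⟩ ⟨ha.trans ham.le, hmb.ne⟩ ham).trans_le
    (slope_le_rightSlope hφ.convexOn (ha.trans ham.le) hmb)

lemma rightSlope_lt_slope (hφ : StrictConvexOn ℝ (Ici 0) φ) (hφm : MonotoneOn φ (Ici 0))
    (hb : 0 ≤ b) (hba : b < a) : rightSlope φ b < slope φ b a := by
  obtain ⟨m, hbm, hma⟩ := exists_between hba
  exact (rightSlope_le_slope hφm hb hbm).trans_lt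
    (hφ.slope_strictMono hb ⟨hb.trans hbm.le, hbm.ne'⟩ ⟨hb.trans hba.le, hba.ne'⟩ hma)

lemma monotoneOn_rightSlope (hφ : ConvexOn ℝ (Ici 0) φ) (hφm : MonotoneOn φ (Ici 0)) :
    MonotoneOn (rightSlope φ) (Ici 0) := by
  intro a ha b _ hab
  rcases hab.eq_or_lt with rfl | hab
  · rfl
  · exact (rightSlope_le_slope hφm ha hab).trans (slope_comm φ a b ▸ slope_le_rightSlope hφ ha hab)

lemma add_rightSlope_mul_lt (hφ : StrictConvexOn ℝ (Ici 0) φ) (hφm : MonotoneOn φ (Ici 0))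
    (ha : 0 ≤ a) (hb : 0 ≤ b) (hab : a ≠ b) : φ b + rightSlope φ b * (a - b) < φ a := by
  rcases hab.lt_or_gt with hab | hba
  · have h := slope_lt_rightSlope hφ ha hab
    rw [slope_def_field, div_lt_iff_of_neg (sub_neg.2 hab)] at h
    linarith
  · have h := rightSlope_lt_slope hφ hφm hb hba
    rw [slope_def_field, lt_div_iff₀ (sub_pos.2 hba)] at h
    linarith

lemma add_rightSlope_mul_le (hφ : ConvexOn ℝ (Ici 0) φ) (hφm : MonotoneOn φ (Ici 0))
    (ha : 0 ≤ a) (hb : 0 ≤ b) : φ b + rightSlope φ b * (a - b) ≤ φ a := by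
  rcases lt_trichotomy a b with hab | rfl | hba
  · have h := slope_le_rightSlope hφ ha hab
    rw [slope_def_field, div_le_iff_of_neg (sub_neg.2 hab)] at h
    linarith
  · simp
  · have h := rightSlope_le_slope hφm hb hba
    rw [slope_def_field, le_div_iff₀ (sub_pos.2 hba)] at h
    linarith

end RightSlope

lemma IsLowerSet.inter_Ioc_ae_eq {A : Set ℝ} (hA : IsLowerSet A) :
    ∃ τ ∈ Icc (0 : ℝ) 1, (A ∩ Ioc 0 1 : Set ℝ) =ᵐ[volume] Ioc 0 τ := by
  set τ := sSup (A ∩ Icc 0 1)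
  have hbdd : BddAbove (A ∩ Icc 0 1) := ⟨1, fun _ hs => hs.2.2⟩
  refine ⟨τ, ⟨Real.sSup_nonneg fun _ hs => hs.2.1, Real.sSup_le (fun _ hs => hs.2.2) zero_le_one⟩,
    ?_⟩
  have hsub : A ∩ Ioc 0 1 ⊆ Ioc 0 τ :=
    fun s ⟨hsA, hs0, hs1⟩ => ⟨hs0, le_csSup hbdd ⟨hsA, hs0.le, hs1⟩⟩
  have hsup : Ioo 0 τ ⊆ A ∩ Ioc 0 1 := by
    rintro s ⟨hs0, hsτ⟩
    have hne : (A ∩ Icc 0 1).Nonempty :=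
      nonempty_iff_ne_empty.2 fun he => by simp [τ, he] at hsτ; linarith
    obtain ⟨a, ⟨haA, -, ha1⟩, hsa⟩ := exists_lt_of_lt_csSup hne hsτ
    exact ⟨hA hsa.le haA, hs0, hsa.le.trans ha1⟩
  exact hsub.eventuallyLE.antisymm (Ioo_ae_eq_Ioc.symm.le.trans hsup.eventuallyLE)

lemma setIntegral_antitone_mul_nonneg {k h : ℝ → ℝ} (hk : Antitone k) (hk1 : 0 ≤ k 1)
    (hh : IntegrableOn h (Ioc 0 1)) (hH : ∀ τ ∈ Icc (0 : ℝ) 1, 0 ≤ ∫ s in 0..τ, h s) :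
    0 ≤ ∫ s in Ioc 0 1, k s * h s := by
  -- `k s * h s = ∫ u in (0, k 0], 1{u < k s} * h s`, and each slice `{s | u < k s}` is an
  -- initial segment of `(0, 1]`.
  set W : ℝ → ℝ → ℝ := fun s u => (Iio (k s)).indicator (fun _ => h s) u
  have hW : Integrable (Function.uncurry W)
      ((volume.restrict (Ioc 0 1)).prod (volume.restrict (Ioc 0 (k 0)))) := by
    have hE : MeasurableSet {p : ℝ × ℝ | p.2 < k p.1} :=
      measurableSet_lt measurable_snd (hk.measurable.comp measurable_fst)
    have hWE : Function.uncurry W = {p : ℝ × ℝ | p.2 < k p.1}.indicator (fun p => h p.1) := by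
      funext p
      simp [W, indicator, Function.uncurry]
    rw [hWE]
    exact (hh.comp_fst _).indicator hE
  have hlayer : ∀ s ∈ Ioc (0 : ℝ) 1, ∫ u in Ioc 0 (k 0), W s u = k s * h s := by
    intro s hs
    have hks : 0 ≤ k s := hk1.trans (hk hs.2)
    have hset : Iio (k s) ∩ Ioc 0 (k 0) = Ioo 0 (k s) := by
      ext u
      simp only [mem_inter_iff, mem_Iio, mem_Ioc, mem_Ioo]
      exact ⟨fun ⟨h1, h2, _⟩ => ⟨h2, h1⟩, fun ⟨h1, h2⟩ => ⟨h2, h1, h2.le.trans (hk hs.1.le)⟩⟩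
    rw [integral_indicator measurableSet_Iio, Measure.restrict_restrict measurableSet_Iio, hset,
      setIntegral_const, Real.volume_real_Ioo_of_le hks, sub_zero, smul_eq_mul]
  have hslice (u : ℝ) : 0 ≤ ∫ s in Ioc 0 1, W s u := by
    obtain ⟨τ, hτ, hae⟩ := IsLowerSet.inter_Ioc_ae_eq (A := {s | u < k s})
      fun a b hba ha => lt_of_lt_of_le ha (hk hba)
    have : (fun s => W s u) = {s | u < k s}.indicator h := by
      ext s
      simp [W, indicator]
    rw [this, integral_indicator (measurableSet_lt measurable_const hk.measurable),
      Measure.restrict_restrict (measurableSet_lt measurable_const hk.measurable),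
      setIntegral_congr_set hae, ← intervalIntegral.integral_of_le hτ.1]
    exact hH τ hτ
  rw [← setIntegral_congr_fun measurableSet_Ioc hlayer, integral_integral_swap hW]
  exact integral_nonneg hslice

lemma Antitone.integrableOn_Ioc {u : ℝ → ℝ} (hu : Antitone u) (a b : ℝ) :
    IntegrableOn u (Ioc a b) :=
  ((hu.antitoneOn _).integrableOn_isCompact isCompact_Icc).mono_set Ioc_subset_Icc_self

section Submajorization

variable {F G φ : ℝ → ℝ}

lemma setIntegral_rightSlope_mul_sub_nonneg (hF : Antitone F) (hG : Antitone G)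
    (hG0 : ∀ s, 0 ≤ G s) (hφ : ConvexOn ℝ (Ici 0) φ) (hφm : MonotoneOn φ (Ici 0))
    (hsub : ∀ s ∈ Icc (0 : ℝ) 1, ∫ t in 0..s, G t ≤ ∫ t in 0..s, F t) :
    0 ≤ ∫ s in Ioc 0 1, rightSlope φ (G s) * (F s - G s) := by
  refine setIntegral_antitone_mul_nonneg
    (fun a b hab => monotoneOn_rightSlope hφ hφm (hG0 b) (hG0 a) (hG hab))
    (rightSlope_nonneg hφm (hG0 1)) ((hF.integrableOn_Ioc 0 1).sub (hG.integrableOn_Ioc 0 1))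
    fun τ hτ => ?_
  rw [intervalIntegral.integral_sub ((hF.antitoneOn _).intervalIntegrable)
    ((hG.antitoneOn _).intervalIntegrable)]
  linarith [hsub τ hτ]

theorem ae_eq_of_submajorized_of_integral_strictConvex_eq (hF : Antitone F) (hG : Antitone G)
    (hF0 : ∀ s, 0 ≤ F s) (hG0 : ∀ s, 0 ≤ G s) (hφ : StrictConvexOn ℝ (Ici 0) φ)
    (hφm : MonotoneOn φ (Ici 0))
    (hsub : ∀ s ∈ Icc (0 : ℝ) 1, ∫ t in 0..s, G t ≤ ∫ t in 0..s, F t)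
    (heq : ∫ s in Ioc 0 1, φ (F s) = ∫ s in Ioc 0 1, φ (G s)) :
    ∀ᵐ s ∂volume.restrict (Ioc 0 1), F s = G s := by
  set k := fun s => rightSlope φ (G s)
  have hk : Antitone k := fun a b hab =>
    monotoneOn_rightSlope hφ.convexOn hφm (hG0 b) (hG0 a) (hG hab)
  have hk0 (s : ℝ) : 0 ≤ k s := rightSlope_nonneg hφm (hG0 s)
  have hkFG : IntegrableOn (fun s => k s * (F s - G s)) (Ioc 0 1) := by
    refine ((hF.integrableOn_Ioc 0 1).sub (hG.integrableOn_Ioc 0 1)).bdd_mul (c := k 0)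
      hk.measurable.aestronglyMeasurable
      (ae_restrict_of_forall_mem measurableSet_Ioc fun s (hs : s ∈ Ioc 0 1) => ?_)
    rw [Real.norm_eq_abs, abs_of_nonneg (hk0 s)]
    exact hk hs.1.le
  have hφF : IntegrableOn (fun s => φ (F s)) (Ioc 0 1) :=
    Antitone.integrableOn_Ioc (fun a b hab => hφm (hF0 b) (hF0 a) (hF hab)) 0 1
  have hφG : IntegrableOn (fun s => φ (G s)) (Ioc 0 1) :=
    Antitone.integrableOn_Ioc (fun a b hab => hφm (hG0 b) (hG0 a) (hG hab)) 0 1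
  set D := fun s => φ (F s) - φ (G s) - k s * (F s - G s)
  have hD0 (s : ℝ) : 0 ≤ D s := by
    have := add_rightSlope_mul_le hφ.convexOn hφm (hF0 s) (hG0 s)
    simp only [D, k]
    linarith
  have hDint : ∫ s in Ioc 0 1, D s = 0 := by
    have hsplit : ∫ s in Ioc 0 1, D s = (∫ s in Ioc 0 1, φ (F s)) - (∫ s in Ioc 0 1, φ (G s))
        - ∫ s in Ioc 0 1, k s * (F s - G s) := by
      rw [← integral_sub hφF hφG,
        ← integral_sub (f := fun s => φ (F s) - φ (G s)) (hφF.sub hφG) hkFG]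
    have hcorr := setIntegral_rightSlope_mul_sub_nonneg hF hG hG0 hφ.convexOn hφm hsub
    exact le_antisymm (by linarith) (integral_nonneg hD0)
  filter_upwards [(integral_eq_zero_iff_of_nonneg hD0 ((hφF.sub hφG).sub hkFG)).1 hDint]
    with s hs
  by_contra hne
  have := add_rightSlope_mul_lt hφ hφm (hF0 s) (hG0 s) hne
  simp only [D, k, Pi.zero_apply] at hs
  linarith

end Submajorization

lemma frequently_nhdsGT_of_ae_restrict {p : ℝ → Prop} {a b : ℝ} (hab : a < b)
    (h : ∀ᵐ s ∂volume.restrict (Ioo a b), p s) : ∃ᶠ s in 𝓝[>] a, p s := by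
  rw [frequently_iff]
  intro U hU
  obtain ⟨c, hac, hcU⟩ := mem_nhdsGT_iff_exists_Ioo_subset.1 hU
  have : (ae (volume.restrict (Ioo a (min b c)))).NeBot :=
    ae_restrict_neBot.2 (by simpa using lt_min hab hac)
  obtain ⟨s, hs, hps⟩ := ((ae_restrict_mem measurableSet_Ioo).and
    (ae_restrict_of_ae_restrict_of_subset (Ioo_subset_Ioo_right (min_le_left b c)) h)).exists
  exact ⟨s, hcU ⟨hs.1, hs.2.trans_le (min_le_right b c)⟩, hps⟩

lemma le_of_frequently_nhdsGT_eq {U V : ℝ → ℝ} {s₀ : ℝ} (hU : LowerSemicontinuous U)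
    (hV : Antitone V) (h : ∃ᶠ s in 𝓝[>] s₀, U s = V s) : U s₀ ≤ V s₀ := by
  by_contra! hlt
  obtain ⟨s, hUV, hVU, hs⟩ := (h.and_eventually
    (((hU s₀ _ hlt).filter_mono nhdsWithin_le_nhds).and self_mem_nhdsWithin)).exists
  exact (hUV ▸ hVU).not_ge (hV hs.le)

theorem decRearr_eq_of_integral_strictConvex_eq_general {X : Type*} [MeasurableSpace X]
    (μ : Measure X) [IsProbabilityMeasure μ] (f g : X → ℝ)
    (hfm : Measurable f) (hgm : Measurable g)
    (hf0 : ∀ᵐ x ∂μ, 0 ≤ f x) (hg0 : ∀ᵐ x ∂μ, 0 ≤ g x)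
    (hfb : ∃ C, ∀ᵐ x ∂μ, f x ≤ C) (hgb : ∃ C, ∀ᵐ x ∂μ, g x ≤ C)
    (hsub : Submajorizes μ f g)
    (φ : ℝ → ℝ) (hφ : StrictConvexOn ℝ (Ici 0) φ) (hφm : MonotoneOn φ (Ici 0))
    (heq : ∫ x, φ (f x) ∂μ = ∫ x, φ (g x) ∂μ) :
    ∀ s ∈ Ico (0:ℝ) 1, decRearr μ g s = decRearr μ f s := by
  obtain ⟨Cf, hfC⟩ := hfb
  obtain ⟨Cg, hgC⟩ := hgb
  have hφf := integral_comp_decRearr hfm.aemeasurable hf0 hfC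
    (aestronglyMeasurable_map_of_monotoneOn hfm.aemeasurable hf0 hφm)
  have hφg := integral_comp_decRearr hgm.aemeasurable hg0 hgC
    (aestronglyMeasurable_map_of_monotoneOn hgm.aemeasurable hg0 hφm)
  have hae := ae_eq_of_submajorized_of_integral_strictConvex_eq (antitone_decRearr hfC)
    (antitone_decRearr hgC) (decRearr_nonneg μ f) (decRearr_nonneg μ g) hφ hφm hsub
    (by rw [hφf, hφg, heq])
  intro s hs
  have hfreq := frequently_nhdsGT_of_ae_restrict hs.2 (ae_restrict_of_ae_restrict_of_subset
    (Ioo_subset_Ioc_self.trans (Ioc_subset_Ioc_left hs.1)) hae)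
  exact le_antisymm (le_of_frequently_nhdsGT_eq (lowerSemicontinuous_decRearr hgC)
    (antitone_decRearr hfC) (hfreq.mono fun _ => Eq.symm))
    (le_of_frequently_nhdsGT_eq (lowerSemicontinuous_decRearr hfC) (antitone_decRearr hgC) hfreq)

theorem decRearr_eq_of_integral_strictConvex_eq {X : Type*} [MeasurableSpace X]
    (μ : Measure X) [IsProbabilityMeasure μ] (f g : X → ℝ)
    (hfm : Measurable f) (hgm : Measurable g)
    (hf0 : ∀ᵐ x ∂μ, 0 ≤ f x) (hg0 : ∀ᵐ x ∂μ, 0 ≤ g x)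
    (hfb : ∃ C, ∀ᵐ x ∂μ, f x ≤ C) (hgb : ∃ C, ∀ᵐ x ∂μ, g x ≤ C)
    (hsub : Submajorizes μ f g)
    (φ : ℝ → ℝ) (hφ : StrictConvexOn ℝ (Ici 0) φ) (hφm : MonotoneOn φ (Ici 0))
    (hφ0 : ∀ t, 0 ≤ t → 0 ≤ φ t)
    (heq : ∫ x, φ (f x) ∂μ = ∫ x, φ (g x) ∂μ) :
    ∀ s ∈ Ico (0:ℝ) 1, decRearr μ g s = decRearr μ f s :=
  decRearr_eq_of_integral_strictConvex_eq_general μ f g hfm hgm hf0 hg0 hfb hgb hsub φ hφ hφm heq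
end

section
/- Let (X, μ) be a probability space, f ∈ L∞(X,μ)⁺ and c ≥ essinf f. Set f_c = max{f, c}. Then the decreasing rearrangement of f_c satisfies: f_c*(s) = f*(s) for 0 ≤ s < s₀ and f_c*(s) = c for s₀ ≤ s < 1, where s₀ = μ{x ∈ X : f(x) > c}. -/
open MeasureTheory Set

/-- Decreasing rearrangement of the water-filling `f_c = max{f, c}`. -/
theorem decRearr_waterFilling {X : Type*} [MeasurableSpace X]
    (μ : Measure X) [IsProbabilityMeasure μ] (f : X → ℝ) (hfm : Measurable f)
    (hf0 : ∀ᵐ x ∂μ, 0 ≤ f x) (hfb : ∃ C, ∀ᵐ x ∂μ, f x ≤ C)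
    (c : ℝ) (hc : essInf f μ ≤ c) :
    ∀ s ∈ Ico (0:ℝ) 1,
      decRearr μ (fun x => max (f x) c) s =
        if s < (μ {x | c < f x}).toReal then decRearr μ f s else c := by
  obtain ⟨C, hC⟩ := hfb
  have hne : (ae μ).NeBot := ae_neBot.mpr (IsProbabilityMeasure.ne_zero μ)
  have hc0 : 0 ≤ c := by
    refine le_trans ?_ hc
    have hbdd : Filter.IsBoundedUnder (· ≤ ·) (ae μ) f := ⟨C, by
      rw [Filter.eventually_map]; exact hC⟩
    exact Filter.le_liminf_of_le hbdd.isCoboundedUnder_ge hf0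
  intro s hs
  obtain ⟨hs0, hs1⟩ := hs
  have hμc : μ {x | c < f x} ≠ ⊤ := measure_ne_top μ _
  by_cases h : s < (μ {x | c < f x}).toReal
  · rw [if_pos h]
    have hlt : ENNReal.ofReal s < μ {x | c < f x} :=
      (ENNReal.ofReal_lt_iff_lt_toReal hs0 hμc).mpr h
    unfold decRearr
    congr 1
    ext t
    simp only [Set.mem_setOf_eq]
    constructor
    · rintro ⟨ht0, htμ⟩
      refine ⟨ht0, ?_⟩
      rcases le_or_gt c t with hct | htc
      · have hset : {x | t < max (f x) c} = {x | t < f x} := by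
          ext x
          simp only [mem_setOf_eq, lt_max_iff, or_iff_left (not_lt.mpr hct)]
        rwa [hset] at htμ
      · exact lt_of_lt_of_le hlt (measure_mono fun x hx => htc.trans hx)
    · rintro ⟨ht0, htμ⟩
      exact ⟨ht0, lt_of_lt_of_le htμ
        (measure_mono fun x hx => show t < max (f x) c from lt_of_lt_of_le hx (le_max_left _ _))⟩
  · rw [if_neg h]
    push_neg at h
    have hge : μ {x | c < f x} ≤ ENNReal.ofReal s := by
      rw [← ENNReal.ofReal_toReal hμc]
      exact ENNReal.ofReal_le_ofReal h
    have hSeq : {t : ℝ | 0 ≤ t ∧ ENNReal.ofReal s < μ {x | t < max (f x) c}}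
        = Ico (0:ℝ) c := by
      ext t
      simp only [mem_setOf_eq, mem_Ico]
      constructor
      · rintro ⟨ht0, htμ⟩
        refine ⟨ht0, ?_⟩
        by_contra hct
        push_neg at hct
        have hsub : {x | t < max (f x) c} ⊆ {x | c < f x} := by
          intro x hx
          rw [mem_setOf_eq, lt_max_iff] at hx
          rcases hx with h1 | h2
          · exact lt_of_le_of_lt hct h1
          · exact absurd h2 (not_lt.mpr hct)
        exact absurd htμ (not_lt.mpr ((measure_mono hsub).trans hge))
      · rintro ⟨ht0, htc⟩
        refine ⟨ht0, ?_⟩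
        have huniv : {x | t < max (f x) c} = univ :=
          eq_univ_of_forall fun x => lt_of_lt_of_le htc (le_max_right _ _)
        rw [huniv, measure_univ]
        exact ENNReal.ofReal_lt_one.mpr hs1
    unfold decRearr
    rw [hSeq]
    rcases eq_or_lt_of_le hc0 with h0 | h0
    · rw [← h0]
      simp [Real.sSup_empty]
    · exact csSup_Ico h0
end

section
/- Let (X, μ) be a probability space, f ∈ L∞(X,μ)⁺, and for c ≥ essinf f define φ(c) = ∫_X (f(x) + (c − f(x))⁺) dμ(x). Then φ is continuous and strictly increasing on [essinf f, ∞), φ(essinf f) = ∫_X f dμ, and φ(c) → ∞ as c → ∞; consequently, for every w ≥ ∫_X f dμ there exists a unique c(w) ≥ essinf f with φ(c(w)) = w. -/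
/-!
Pointwise `f + (c - f)⁺ = max c f`, so `φ(c) = ∫ max c f`. Since `c ↦ max c y` is
1-Lipschitz, so is `φ`, and `φ(c) ≥ c`. For `essinf f ≤ c < c'` the integrand of
`φ(c') - φ(c)` is nonnegative with support `{f < c'}`, which has positive measure because
`c'` exceeds the essential infimum; hence `φ` is strictly increasing. At `c = essinf f`,
`max c f = f` almost everywhere. Existence and uniqueness of `c(w)` then follow from the
intermediate value theorem and strict monotonicity.
-/

open MeasureTheory Set Filter

/-- The water-filling total mass function `φ(c) = ∫ f + (c − f)⁺ dμ`. -/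
noncomputable def waterPhi {X : Type*} [MeasurableSpace X] (μ : Measure X)
    (f : X → ℝ) (c : ℝ) : ℝ :=
  ∫ x, (f x + max (c - f x) 0) ∂μ

theorem StrictMonoOn.existsUnique_apply_eq_of_continuousOn_Ici {g : ℝ → ℝ} {a w : ℝ}
    (hmono : StrictMonoOn g (Ici a)) (hcont : ContinuousOn g (Ici a))
    (htop : Tendsto g atTop atTop) (hw : g a ≤ w) : ∃! c, a ≤ c ∧ g c = w := by
  obtain ⟨b, hwb, hab⟩ := ((htop.eventually_ge_atTop w).and (eventually_ge_atTop a)).exists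
  obtain ⟨c, hc, hcw⟩ := intermediate_value_Icc hab (hcont.mono Icc_subset_Ici_self) ⟨hw, hwb⟩
  exact ⟨c, ⟨hc.1, hcw⟩, fun c' ⟨hc', hc'w⟩ => hmono.injOn hc' hc.1 (hc'w.trans hcw.symm)⟩

theorem measure_lt_ne_zero_of_essInf_lt {X : Type*} [MeasurableSpace X] {μ : Measure X}
    [NeZero μ] {f : X → ℝ} (hf : IsBoundedUnder (· ≤ ·) (ae μ) f) {m : ℝ}
    (hm : essInf f μ < m) : μ {x | f x < m} ≠ 0 := by
  intro h
  refine hm.not_ge (le_essInf_of_ae_le m ?_ hf.isCoboundedUnder_ge)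
  simpa [EventuallyLE, ae_iff] using h

theorem support_max_sub_max {X : Type*} {f : X → ℝ} {c c' : ℝ} (h : c < c') :
    Function.support (fun x => max c' (f x) - max c (f x)) = {x | f x < c'} := by
  ext x
  simp only [Function.mem_support, sub_ne_zero, mem_ofPred_eq]
  constructor
  · intro hne
    by_contra! hle
    exact hne (by rw [max_eq_right hle, max_eq_right (h.le.trans hle)])
  · intro hlt
    rw [max_eq_left hlt.le]
    exact (max_lt h hlt).ne'

section

variable {X : Type*} [MeasurableSpace X] {μ : Measure X} {f : X → ℝ}

theorem waterPhi_eq_integral_max (μ : Measure X) (f : X → ℝ) (c : ℝ) :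
    waterPhi μ f c = ∫ x, max c (f x) ∂μ := by
  unfold waterPhi
  congr 1 with x
  rw [← max_add_add_left, add_sub_cancel, add_zero]

theorem MeasureTheory.Integrable.const_max [IsFiniteMeasure μ] (hf : Integrable f μ) (c : ℝ) :
    Integrable (fun x => max c (f x)) μ :=
  (integrable_const c).sup hf

theorem waterPhi_lipschitzWith [IsProbabilityMeasure μ] (hf : Integrable f μ) :
    LipschitzWith 1 (waterPhi μ f) := by
  refine LipschitzWith.of_dist_le_mul fun c c' => ?_
  rw [waterPhi_eq_integral_max, waterPhi_eq_integral_max, NNReal.coe_one, one_mul,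
    Real.dist_eq, Real.dist_eq, ← integral_sub (hf.const_max c) (hf.const_max c')]
  simpa using norm_integral_le_of_norm_le_const (μ := μ)
    (f := fun x => max c (f x) - max c' (f x))
    (Eventually.of_forall fun x => abs_max_sub_max_le_abs c c' (f x))

theorem le_waterPhi [IsProbabilityMeasure μ] (hf : Integrable f μ) (c : ℝ) :
    c ≤ waterPhi μ f c := by
  rw [waterPhi_eq_integral_max]
  simpa using integral_mono (integrable_const c) (hf.const_max c) fun x => le_max_left c (f x)

theorem tendsto_waterPhi_atTop [IsProbabilityMeasure μ] (hf : Integrable f μ) :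
    Tendsto (waterPhi μ f) atTop atTop :=
  tendsto_atTop_mono (le_waterPhi hf) tendsto_id

theorem waterPhi_essInf (hf : IsBoundedUnder (· ≥ ·) (ae μ) f) :
    waterPhi μ f (essInf f μ) = ∫ x, f x ∂μ := by
  rw [waterPhi_eq_integral_max]
  refine integral_congr_ae ?_
  filter_upwards [ae_essInf_le hf] with x hx using max_eq_right hx

theorem waterPhi_strictMonoOn [IsFiniteMeasure μ] [NeZero μ] (hf : Integrable f μ)
    (hbdd : IsBoundedUnder (· ≤ ·) (ae μ) f) :
    StrictMonoOn (waterPhi μ f) (Ici (essInf f μ)) := by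
  intro c hc c' _ hcc'
  rw [waterPhi_eq_integral_max, waterPhi_eq_integral_max, ← sub_pos,
    ← integral_sub (hf.const_max c') (hf.const_max c),
    integral_pos_iff_support_of_nonneg (fun x => sub_nonneg.2 (max_le_max_right _ hcc'.le))
      ((hf.const_max c').sub (hf.const_max c)), support_max_sub_max hcc']
  exact pos_iff_ne_zero.2 (measure_lt_ne_zero_of_essInf_lt hbdd (lt_of_le_of_lt hc hcc'))

end

theorem waterPhi_properties {X : Type*} [MeasurableSpace X]
    (μ : Measure X) [IsProbabilityMeasure μ] (f : X → ℝ) (hfm : Measurable f)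
    (hf0 : ∀ᵐ x ∂μ, 0 ≤ f x) (hfb : ∃ C, ∀ᵐ x ∂μ, f x ≤ C) :
    ContinuousOn (waterPhi μ f) (Ici (essInf f μ)) ∧
    StrictMonoOn (waterPhi μ f) (Ici (essInf f μ)) ∧
    waterPhi μ f (essInf f μ) = ∫ x, f x ∂μ ∧
    Tendsto (waterPhi μ f) atTop atTop ∧
    ∀ w, (∫ x, f x ∂μ) ≤ w → ∃! c, essInf f μ ≤ c ∧ waterPhi μ f c = w := by
  obtain ⟨C, hC⟩ := hfb
  have hint : Integrable f μ := Integrable.of_bound hfm.aestronglyMeasurable C <| by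
    filter_upwards [hf0, hC] with x h0 h1 using (Real.norm_of_nonneg h0).trans_le h1
  have hcont := (waterPhi_lipschitzWith hint).continuous.continuousOn (s := Ici (essInf f μ))
  have hmono := waterPhi_strictMonoOn hint (isBoundedUnder_of_eventually_le hC)
  have hbot := waterPhi_essInf (isBoundedUnder_of_eventually_ge hf0)
  have htop := tendsto_waterPhi_atTop hint
  exact ⟨hcont, hmono, hbot, htop, fun w hw =>
    hmono.existsUnique_apply_eq_of_continuousOn_Ici hcont htop (hbot ▸ hw)⟩
end

section
/- Let (X, μ) be a probability space, f ∈ L∞(X,μ)⁺, w ≥ ∫_X f dμ, and c the unique level with ∫_X max{f,c} dμ = w; set f_c = max{f,c}. If h ∈ L∞(X,μ)⁺ satisfies f ≤ h a.e. and ∫_X h dμ ≥ w, then for every non-decreasing convex φ : ℝ⁺ → ℝ⁺, ∫_X φ(f_c) dμ ≤ ∫_X φ(h) dμ. Moreover, if equality holds for some non-decreasing strictly convex φ, then h = f_c almost everywhere. -/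
open MeasureTheory Set Filter

/-!
Let `s ≥ 0` be the slope of a supporting line of `φ` at the level `c`, so that
`ψ t = φ t - s * t` is convex on `[0, ∞)` with its minimum at `c`. Then `ψ ∘ f_c ≤ ψ ∘ h`
pointwise: where `f ≤ c`, `f_c = c` is the minimum, and elsewhere `f_c = f ≤ h` lies to the right
of `c`, where `ψ` is monotone. Together with `s ∫ f_c = s w ≤ s ∫ h` this gives the inequality.
If equality holds, then `ψ ∘ h = ψ ∘ f_c` a.e.; for strictly convex `φ`, `ψ` attains its minimum
only at `c` and is injective on `[c, ∞)`, so `h = f_c` a.e.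
-/

theorem ConvexOn.exists_isMinOn_sub_mul {φ : ℝ → ℝ} {a c : ℝ} (hφ : ConvexOn ℝ (Ici a) φ)
    (hmono : MonotoneOn φ (Ici a)) (hc : a ≤ c) :
    ∃ s, 0 ≤ s ∧ IsMinOn (fun t => φ t - s * t) (Ici a) c := by
  -- the infimum of the slopes to the right of `c`, which exists even when `c = a`
  set S := (fun t => (φ t - φ c) / (t - c)) '' Ioi c
  have hS : S.Nonempty := (nonempty_Ioi (a := c)).image _
  have hS0 : ∀ y ∈ S, 0 ≤ y := by
    rintro _ ⟨t, ht, rfl⟩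
    exact div_nonneg (sub_nonneg.2 (hmono hc (hc.trans (le_of_lt ht)) (le_of_lt ht)))
      (sub_nonneg.2 (le_of_lt ht))
  refine ⟨sInf S, le_csInf hS hS0, fun t (ht : a ≤ t) => ?_⟩
  show φ c - sInf S * c ≤ φ t - sInf S * t
  rcases lt_trichotomy t c with htc | rfl | hct
  · have hle : (φ c - φ t) / (c - t) ≤ sInf S := by
      refine le_csInf hS ?_
      rintro _ ⟨u, hu, rfl⟩
      exact hφ.slope_mono_adjacent ht (hc.trans (le_of_lt hu)) htc hu
    rw [div_le_iff₀ (sub_pos.2 htc)] at hle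
    linarith
  · rfl
  · have hle : sInf S ≤ (φ t - φ c) / (t - c) := csInf_le ⟨0, hS0⟩ ⟨t, hct, rfl⟩
    rw [le_div_iff₀ (sub_pos.2 hct)] at hle
    linarith

theorem ConvexOn.monotoneOn_of_isMinOn {ψ : ℝ → ℝ} {a c : ℝ} (hψ : ConvexOn ℝ (Ici a) ψ)
    (hmin : IsMinOn ψ (Ici a) c) (hc : a ≤ c) : MonotoneOn ψ (Ici c) := by
  intro u (hu : c ≤ u) v (hv : c ≤ v) huv
  rcases hu.eq_or_lt with rfl | hcu
  · exact hmin (hc.trans hv : a ≤ v)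
  · exact hψ.le_right_of_left_le'' hc (hc.trans hv) hcu huv (hmin (hc.trans hu : a ≤ u))

theorem apply_max_le_of_isMinOn {ψ : ℝ → ℝ} {c u v : ℝ} (hmin : IsMinOn ψ (Ici 0) c)
    (hmono : MonotoneOn ψ (Ici c)) (huv : u ≤ v) (hv : 0 ≤ v) : ψ (max u c) ≤ ψ v := by
  rcases le_total u c with huc | hcu
  · rw [max_eq_right huc]
    exact hmin hv
  · rw [max_eq_left hcu]
    exact hmono hcu (hcu.trans huv) huv

theorem StrictConvexOn.eq_max_of_apply_eq {ψ : ℝ → ℝ} {c u v : ℝ}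
    (hψ : StrictConvexOn ℝ (Ici 0) ψ) (hmin : IsMinOn ψ (Ici 0) c) (hc : 0 ≤ c) (huv : u ≤ v)
    (hv : 0 ≤ v) (heq : ψ (max u c) = ψ v) : v = max u c := by
  rcases le_total u c with huc | hcu
  · rw [max_eq_right huc] at heq ⊢
    refine hψ.eq_of_isMinOn (fun t ht => ?_) hmin hv hc
    rw [← heq]; exact hmin ht
  · rw [max_eq_left hcu] at heq ⊢
    rcases hcu.eq_or_lt with rfl | hcu
    · exact hψ.eq_of_isMinOn (fun t ht => heq ▸ hmin ht) hmin hv hc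
    have hlt : ψ c < ψ u := (hmin (hc.trans hcu.le : (0:ℝ) ≤ u)).lt_of_ne
      fun h => hcu.ne (hψ.eq_of_isMinOn hmin (fun t ht => h ▸ hmin ht) hc (hc.trans hcu.le))
    exact ((hψ.convexOn.strictMonoOn hc hcu hlt).injOn ⟨hc.trans hcu.le, self_mem_Ici⟩
      ⟨hv, huv⟩ heq).symm

theorem MonotoneOn.integrable_comp {X : Type*} [MeasurableSpace X] {μ : Measure X}
    [IsFiniteMeasure μ] {φ : ℝ → ℝ} {a C : ℝ} (hφ : MonotoneOn φ (Ici a)) {g : X → ℝ}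
    (hg : Measurable g) (hag : ∀ᵐ x ∂μ, a ≤ g x) (hgC : ∀ᵐ x ∂μ, g x ≤ C) :
    Integrable (fun x => φ (g x)) μ := by
  -- `φ` need not be measurable outside `[a, ∞)`, so go through a globally monotone function
  have hφmax : Monotone fun t => φ (max t a) := fun u v huv =>
    hφ (le_max_right u a) (le_max_right v a) (max_le_max huv le_rfl)
  have hφg : (fun x => φ (max (g x) a)) =ᵐ[μ] fun x => φ (g x) := by
    filter_upwards [hag] with x hx
    rw [max_eq_left hx]
  refine Integrable.of_bound ((hφmax.measurable.comp hg).aestronglyMeasurable.congr hφg)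
    (max |φ a| |φ C|) ?_
  filter_upwards [hag, hgC] with x hax hxC
  exact abs_le_max_abs_abs (hφ self_mem_Ici hax hax) (hφ hax (hax.trans hxC) hxC)

section WaterFilling

variable {X : Type*} [MeasurableSpace X] {μ : Measure X} {f h : X → ℝ} {c : ℝ} {φ : ℝ → ℝ}

theorem integral_comp_eq_integral_sub_mul_add {g : X → ℝ} (hg : Integrable g μ)
    (hφg : Integrable (fun x => φ (g x)) μ) (s : ℝ) :
    ∫ x, φ (g x) ∂μ = ∫ x, (φ (g x) - s * g x) ∂μ + s * ∫ x, g x ∂μ := by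
  rw [integral_sub hφg (hg.const_mul s), integral_const_mul]
  ring

theorem ae_apply_max_le_of_isMinOn {ψ : ℝ → ℝ} (hψ : ConvexOn ℝ (Ici 0) ψ)
    (hmin : IsMinOn ψ (Ici 0) c) (hc : 0 ≤ c) (hfh : ∀ᵐ x ∂μ, f x ≤ h x)
    (hh0 : ∀ᵐ x ∂μ, 0 ≤ h x) : ∀ᵐ x ∂μ, ψ (max (f x) c) ≤ ψ (h x) := by
  filter_upwards [hfh, hh0] with x hfx hx0
  exact apply_max_le_of_isMinOn hmin (hψ.monotoneOn_of_isMinOn hmin hc) hfx hx0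

theorem integral_comp_max_le_of_convexOn (hφ : ConvexOn ℝ (Ici 0) φ)
    (hmono : MonotoneOn φ (Ici 0)) (hc : 0 ≤ c) (hfh : ∀ᵐ x ∂μ, f x ≤ h x)
    (hh0 : ∀ᵐ x ∂μ, 0 ≤ h x) (hmean : ∫ x, max (f x) c ∂μ ≤ ∫ x, h x ∂μ)
    (hF : Integrable (fun x => max (f x) c) μ) (hh : Integrable h μ)
    (hφF : Integrable (fun x => φ (max (f x) c)) μ) (hφh : Integrable (fun x => φ (h x)) μ) :
    ∫ x, φ (max (f x) c) ∂μ ≤ ∫ x, φ (h x) ∂μ := by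
  obtain ⟨s, hs, hmin⟩ := hφ.exists_isMinOn_sub_mul hmono hc
  have hψ : ConvexOn ℝ (Ici 0) fun t => φ t - s * t :=
    hφ.sub ((concaveOn_id (convex_Ici 0)).smul hs)
  rw [integral_comp_eq_integral_sub_mul_add hF hφF s,
    integral_comp_eq_integral_sub_mul_add hh hφh s]
  exact add_le_add (integral_mono_ae (hφF.sub (hF.const_mul s)) (hφh.sub (hh.const_mul s))
    (ae_apply_max_le_of_isMinOn hψ hmin hc hfh hh0)) (mul_le_mul_of_nonneg_left hmean hs)

theorem ae_eq_max_of_integral_comp_eq (hφ : StrictConvexOn ℝ (Ici 0) φ)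
    (hmono : MonotoneOn φ (Ici 0)) (hc : 0 ≤ c) (hfh : ∀ᵐ x ∂μ, f x ≤ h x)
    (hh0 : ∀ᵐ x ∂μ, 0 ≤ h x) (hmean : ∫ x, max (f x) c ∂μ ≤ ∫ x, h x ∂μ)
    (hF : Integrable (fun x => max (f x) c) μ) (hh : Integrable h μ)
    (hφF : Integrable (fun x => φ (max (f x) c)) μ) (hφh : Integrable (fun x => φ (h x)) μ)
    (heq : ∫ x, φ (max (f x) c) ∂μ = ∫ x, φ (h x) ∂μ) :
    h =ᵐ[μ] fun x => max (f x) c := by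
  obtain ⟨s, hs, hmin⟩ := hφ.convexOn.exists_isMinOn_sub_mul hmono hc
  have hψ : StrictConvexOn ℝ (Ici 0) fun t => φ t - s * t :=
    hφ.sub_concaveOn ((concaveOn_id (convex_Ici 0)).smul hs)
  have hψF := hφF.sub (hF.const_mul s)
  have hψh := hφh.sub (hh.const_mul s)
  have hle := ae_apply_max_le_of_isMinOn hψ.convexOn hmin hc hfh hh0
  rw [integral_comp_eq_integral_sub_mul_add hF hφF s,
    integral_comp_eq_integral_sub_mul_add hh hφh s] at heq
  have hψeq : ∫ x, (φ (max (f x) c) - s * max (f x) c) ∂μ = ∫ x, (φ (h x) - s * h x) ∂μ :=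
    le_antisymm (integral_mono_ae hψF hψh hle)
      (by linarith [mul_le_mul_of_nonneg_left hmean hs])
  filter_upwards [(integral_eq_iff_of_ae_le hψF hψh hle).1 hψeq, hfh, hh0] with x hx hfx hx0
  exact hψ.eq_max_of_apply_eq hmin hc hfx hx0 hx

end WaterFilling

theorem waterFilling_convex_optimal_general {X : Type*} [MeasurableSpace X]
    (μ : Measure X) [IsProbabilityMeasure μ] (f : X → ℝ) (hfm : Measurable f)
    (hf0 : ∀ᵐ x ∂μ, 0 ≤ f x) (hfb : ∃ C, ∀ᵐ x ∂μ, f x ≤ C)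
    (w : ℝ)
    (c : ℝ) (hc : essInf f μ ≤ c) (hcw : (∫ x, max (f x) c ∂μ) = w)
    (h : X → ℝ) (hhm : Measurable h) (hh0 : ∀ᵐ x ∂μ, 0 ≤ h x)
    (hhb : ∃ C, ∀ᵐ x ∂μ, h x ≤ C)
    (hfh : ∀ᵐ x ∂μ, f x ≤ h x) (hhw : w ≤ ∫ x, h x ∂μ) :
    (∀ φ : ℝ → ℝ, ConvexOn ℝ (Ici 0) φ → MonotoneOn φ (Ici 0) →
        (∀ t, 0 ≤ t → 0 ≤ φ t) →
        (∫ x, φ (max (f x) c) ∂μ) ≤ ∫ x, φ (h x) ∂μ) ∧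
    (∀ φ : ℝ → ℝ, StrictConvexOn ℝ (Ici 0) φ → MonotoneOn φ (Ici 0) →
        (∀ t, 0 ≤ t → 0 ≤ φ t) →
        (∫ x, φ (max (f x) c) ∂μ) = ∫ x, φ (h x) ∂μ →
        h =ᵐ[μ] fun x => max (f x) c) := by
  obtain ⟨Cf, hfC⟩ := hfb
  obtain ⟨Ch, hhC⟩ := hhb
  have hc0 : 0 ≤ c :=
    (le_essInf_of_ae_le 0 hf0 (IsBoundedUnder.isCoboundedUnder_ge ⟨Cf, hfC⟩)).trans hc
  have hF0 : ∀ᵐ x ∂μ, 0 ≤ max (f x) c :=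
    Eventually.of_forall fun x => hc0.trans (le_max_right _ _)
  have hFC : ∀ᵐ x ∂μ, max (f x) c ≤ max Cf c := hfC.mono fun x hx => max_le_max hx le_rfl
  have hint : ∀ φ : ℝ → ℝ, MonotoneOn φ (Ici 0) →
      Integrable (fun x => φ (max (f x) c)) μ ∧ Integrable (fun x => φ (h x)) μ :=
    fun φ hφ => ⟨hφ.integrable_comp (hfm.max measurable_const) hF0 hFC,
      hφ.integrable_comp hhm hh0 hhC⟩
  obtain ⟨hF, hh⟩ := hint id monotoneOn_id
  have hmean : ∫ x, max (f x) c ∂μ ≤ ∫ x, h x ∂μ := hcw ▸ hhw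
  refine ⟨fun φ hφ hmono _ => ?_, fun φ hφ hmono _ heq => ?_⟩
  · obtain ⟨hφF, hφh⟩ := hint φ hmono
    exact integral_comp_max_le_of_convexOn hφ hmono hc0 hfh hh0 hmean hF hh hφF hφh
  · obtain ⟨hφF, hφh⟩ := hint φ hmono
    exact ae_eq_max_of_integral_comp_eq hφ hmono hc0 hfh hh0 hmean hF hh hφF hφh heq

/-- Optimality of the water-filling `f_c = max{f,c}` for convex potentials,
with essential uniqueness in the strictly convex case. -/
theorem waterFilling_convex_optimal {X : Type*} [MeasurableSpace X]
    (μ : Measure X) [IsProbabilityMeasure μ] (f : X → ℝ) (hfm : Measurable f)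
    (hf0 : ∀ᵐ x ∂μ, 0 ≤ f x) (hfb : ∃ C, ∀ᵐ x ∂μ, f x ≤ C)
    (w : ℝ) (hw : (∫ x, f x ∂μ) ≤ w)
    (c : ℝ) (hc : essInf f μ ≤ c) (hcw : (∫ x, max (f x) c ∂μ) = w)
    (h : X → ℝ) (hhm : Measurable h) (hh0 : ∀ᵐ x ∂μ, 0 ≤ h x)
    (hhb : ∃ C, ∀ᵐ x ∂μ, h x ≤ C)
    (hfh : ∀ᵐ x ∂μ, f x ≤ h x) (hhw : w ≤ ∫ x, h x ∂μ) :
    (∀ φ : ℝ → ℝ, ConvexOn ℝ (Ici 0) φ → MonotoneOn φ (Ici 0) →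
        (∀ t, 0 ≤ t → 0 ≤ φ t) →
        (∫ x, φ (max (f x) c) ∂μ) ≤ ∫ x, φ (h x) ∂μ) ∧
    (∀ φ : ℝ → ℝ, StrictConvexOn ℝ (Ici 0) φ → MonotoneOn φ (Ici 0) →
        (∀ t, 0 ≤ t → 0 ≤ φ t) →
        (∫ x, φ (max (f x) c) ∂μ) = ∫ x, φ (h x) ∂μ →
        h =ᵐ[μ] fun x => max (f x) c) :=
  waterFilling_convex_optimal_general μ f hfm hf0 hfb w c hc hcw h hhm hh0 hhb hfh hhw
end

section
/- Measurable interpolation of interlacing sequences: let λ₁ ≥ … ≥ λ_n : X → ℝ⁺ be measurable, d ∈ {1,…,n−1}, and β₁ ≥ … ≥ β_d : X → ℝ⁺ be measurable functions with λ_j(x) ≥ β_j(x) ≥ λ_{n−d+j}(x) for j = 1,…,d and a.e. x ∈ X. Then there exist measurable functions γ_{i,j} : X → ℝ⁺ for 0 ≤ i ≤ n−d, 1 ≤ j ≤ n−i, such that: γ_{0,j} = λ_j for j ≤ n; γ_{n−d,j} = β_j for j ≤ d; each row is non-increasing (γ_{i,j} ≥ γ_{i,j+1} a.e.); and consecutive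 rows interlace (γ_{i,j} ≥ γ_{i+1,j} ≥ γ_{i,j+1} a.e. for j ≤ n−i−1). -/
open MeasureTheory

/-- Measurable interpolation of interlacing sequences (1-based indexing). -/
theorem measurable_interlacing_interpolation {X : Type*} [MeasurableSpace X]
    (μ : Measure X) (n d : ℕ) (hd1 : 1 ≤ d) (hdn : d < n)
    (lam : ℕ → X → ℝ) (hlamm : ∀ j, Measurable (lam j))
    (hlam0 : ∀ᵐ x ∂μ, ∀ j, 1 ≤ j → j ≤ n → 0 ≤ lam j x)
    (hlamord : ∀ᵐ x ∂μ, ∀ j, 1 ≤ j → j < n → lam (j + 1) x ≤ lam j x)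
    (beta : ℕ → X → ℝ) (hbm : ∀ j, Measurable (beta j))
    (hb0 : ∀ᵐ x ∂μ, ∀ j, 1 ≤ j → j ≤ d → 0 ≤ beta j x)
    (hbord : ∀ᵐ x ∂μ, ∀ j, 1 ≤ j → j < d → beta (j + 1) x ≤ beta j x)
    (hinter : ∀ᵐ x ∂μ, ∀ j, 1 ≤ j → j ≤ d →
      beta j x ≤ lam j x ∧ lam (n - d + j) x ≤ beta j x) :
    ∃ γ : ℕ → ℕ → X → ℝ,
      (∀ i j, Measurable (γ i j)) ∧
      ∀ᵐ x ∂μ,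
        (∀ i j, 0 ≤ γ i j x) ∧
        (∀ j, 1 ≤ j → j ≤ n → γ 0 j x = lam j x) ∧
        (∀ j, 1 ≤ j → j ≤ d → γ (n - d) j x = beta j x) ∧
        (∀ i j, i ≤ n - d → 1 ≤ j → j + 1 ≤ n - i → γ i (j + 1) x ≤ γ i j x) ∧
        (∀ i j, i < n - d → 1 ≤ j → j ≤ n - i - 1 →
          γ (i + 1) j x ≤ γ i j x ∧ γ i (j + 1) x ≤ γ (i + 1) j x) := by
  set B : ℕ → X → ℝ := fun j x => if 1 ≤ j ∧ j ≤ d then beta j x else 0 with hBdef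
  refine ⟨fun i j x => max 0 (max (B j x) (lam (i + j) x)), ?_, ?_⟩
  · intro i j
    refine measurable_const.max (Measurable.max ?_ (hlamm _))
    by_cases h : 1 ≤ j ∧ j ≤ d <;> simp [hBdef, h] <;> exact hbm j
  · filter_upwards [hlam0, hlamord, hb0, hbord, hinter] with x hlam0 hlamord hb0 hbord hinter
    -- basic facts
    have hB0 : ∀ j, 0 ≤ B j x := by
      intro j
      by_cases h : 1 ≤ j ∧ j ≤ d
      · simpa [hBdef, h] using hb0 j h.1 h.2
      · simp [hBdef, h]
    have hBord : ∀ j, 1 ≤ j → B (j + 1) x ≤ B j x := by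
      intro j hj
      by_cases h : j + 1 ≤ d
      · have h1 : B (j + 1) x = beta (j + 1) x := if_pos ⟨by omega, h⟩
        have h2 : B j x = beta j x := if_pos ⟨hj, by omega⟩
        rw [h1, h2]; exact hbord j hj (by omega)
      · have h1 : B (j + 1) x = 0 := if_neg (fun hc => h hc.2)
        rw [h1]; exact hB0 j
    refine ⟨?_, ?_, ?_, ?_, ?_⟩
    · intro i j; exact le_max_left _ _
    · intro j hj1 hjn
      have hBle : B j x ≤ lam j x := by
        by_cases h : 1 ≤ j ∧ j ≤ d
        · simpa [hBdef, h] using (hinter j h.1 h.2).1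
        · simpa [hBdef, h] using hlam0 j hj1 hjn
      simp [max_eq_right hBle, max_eq_right (hlam0 j hj1 hjn)]
    · intro j hj1 hjd
      have hB : B j x = beta j x := by simp [hBdef, hj1, hjd]
      have hle : lam (n - d + j) x ≤ B j x := by rw [hB]; exact (hinter j hj1 hjd).2
      rw [max_eq_left hle, hB, max_eq_right (hb0 j hj1 hjd)]
    · intro i j hi hj1 hjn
      have hlam : lam (i + (j + 1)) x ≤ lam (i + j) x := by
        have := hlamord (i + j) (by omega) (by omega)
        simpa [Nat.add_assoc] using this
      exact max_le_max le_rfl (max_le_max (hBord j hj1) hlam)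
    · intro i j hi hj1 hjn
      constructor
      · have hlam : lam (i + 1 + j) x ≤ lam (i + j) x := by
          have := hlamord (i + j) (by omega) (by omega)
          simpa [Nat.add_right_comm] using this
        exact max_le_max le_rfl (max_le_max le_rfl hlam)
      · have : i + (j + 1) = i + 1 + j := by omega
        rw [this]
        exact max_le_max le_rfl (max_le_max (hBord j hj1) le_rfl)
end

section
/- Let A, B ∈ M_n(ℂ)⁺ with B of rank at most r ≤ n, and let φ : ℝ⁺ → ℝ⁺ be convex. Then, combining Lidskii's inequality with the rank constraint: Σ_{j=1}^{r} φ(λ_{n−j+1}(A) + λ_j(B)) + Σ_{j=r+1}^{n} φ(λ_{n−j+1}(A)) ≤ Σ_{j=1}^{n} φ(λ_j(A+B)), where λ_j(·) denotes the j-th largest eigenvalue. -/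
/-!
Since `B` has rank at most `r`, `λ_j(B) = 0` for `j > r`, so the left-hand side is
`∑ φ(λ_{n-j+1}(A) + λ_j(B))`. By Lidskii's inequality this vector is majorized by `λ(A + B)`,
and Karamata's inequality finishes the proof.

Lidskii's inequality is proved as in Li–Mathias: for `|S| = k + 1` and `t = λ_{k+1}(Y)`, one has
`Y ≤ P + t` with `P = (Y - t)₊ ≥ 0`, so by Weyl's monotonicity `λ_i(X + Y) ≤ λ_i(X + P) + t`,
while `λ_i(X + P) - λ_i(X)` is nonnegative with total `tr P = ∑_{j ≤ k} (λ_j(Y) - t)`.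
Karamata's inequality is Abel summation against the secant slopes of `φ` between the two
vectors, which are antitone along the common order.
-/

open Matrix
open scoped ComplexOrder

/-- `lam` is the list of eigenvalues of the Hermitian matrix `A`, counting
multiplicities, arranged in non-increasing order. -/
def IsOrderedSpectrum {m : ℕ} (A : Matrix (Fin m) (Fin m) ℂ) (hA : A.IsHermitian)
    (lam : Fin m → ℝ) : Prop :=
  Antitone lam ∧ ∃ σ : Equiv.Perm (Fin m), ∀ i, lam i = hA.eigenvalues (σ i)

open Finset Module Submodule
open scoped InnerProductSpace

theorem ConvexOn.slope_le_slope {s : Set ℝ} {f : ℝ → ℝ} (hf : ConvexOn ℝ s f) {a b a' b' : ℝ}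
    (ha : a ∈ s) (hb : b ∈ s) (ha' : a' ∈ s) (hb' : b' ∈ s) (hab : a ≠ b) (hab' : a' ≠ b')
    (haa' : a ≤ a') (hbb' : b ≤ b') : slope f a b ≤ slope f a' b' := by
  by_cases hb'a : b' = a
  · have hba' : b ≠ a' := by rintro rfl; exact hab (le_antisymm haa' (hb'a ▸ hbb'))
    calc slope f a b = slope f b a := slope_comm _ _ _
      _ ≤ slope f b a' := hf.slope_mono hb ⟨ha, hab⟩ ⟨ha', hba'.symm⟩ haa'
      _ = slope f a' b := slope_comm _ _ _
      _ ≤ slope f a' b' := hf.slope_mono ha' ⟨hb, hba'⟩ ⟨hb', hab'.symm⟩ hbb'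
  · calc slope f a b ≤ slope f a b' := hf.slope_mono ha ⟨hb, hab.symm⟩ ⟨hb', hb'a⟩ hbb'
      _ = slope f b' a := slope_comm _ _ _
      _ ≤ slope f b' a' := hf.slope_mono hb' ⟨ha, Ne.symm hb'a⟩ ⟨ha', hab'⟩ haa'
      _ = slope f a' b' := slope_comm _ _ _

theorem Fin.last_mul_sum_le_sum_mul {N : ℕ} {g d : Fin (N + 1) → ℝ} (hg : Antitone g)
    (hd : ∀ k, 0 ≤ ∑ i ∈ Iic k, d i) :
    g (Fin.last N) * ∑ i, d i ≤ ∑ i, g i * d i := by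
  induction N with
  | zero => simp
  | succ N ih =>
    have hd' : ∀ k, 0 ≤ ∑ i ∈ Iic k, d (Fin.castSucc i) := fun k => by
      simpa [← Fin.map_castSuccEmb_Iic, sum_map] using hd k.castSucc
    have ih' := ih (hg.comp_monotone Fin.strictMono_castSucc.monotone) hd'
    have hsum : 0 ≤ ∑ i : Fin (N + 1), d i.castSucc := by
      simpa [show Iic (Fin.last N) = univ by ext; simp [Fin.le_last]] using hd' (Fin.last N)
    have hlast : g (Fin.last (N + 1)) ≤ g (Fin.last N).castSucc := hg (Fin.le_last _)
    simp only [Function.comp_apply] at ih'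
    rw [Fin.sum_univ_castSucc, Fin.sum_univ_castSucc (fun i => g i * d i)]
    nlinarith

theorem Fin.sum_mul_nonneg_of_antitone {N : ℕ} {g d : Fin N → ℝ} (hg : Antitone g)
    (hd : ∀ k, 0 ≤ ∑ i ∈ Iic k, d i) (hd0 : ∑ i, d i = 0) : 0 ≤ ∑ i, g i * d i := by
  cases N with
  | zero => simp
  | succ N => simpa [hd0] using Fin.last_mul_sum_le_sum_mul hg hd

theorem ConvexOn.sum_le_sum_of_antitone {s : Set ℝ} {φ : ℝ → ℝ} (hφ : ConvexOn ℝ s φ) {N : ℕ}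
    {w c : Fin N → ℝ} (hw : Antitone w) (hc : Antitone c) (hws : ∀ i, w i ∈ s)
    (hcs : ∀ i, c i ∈ s) (hwc : ∀ k, ∑ i ∈ Iic k, w i ≤ ∑ i ∈ Iic k, c i)
    (hsum : ∑ i, w i = ∑ i, c i) : ∑ i, φ (w i) ≤ ∑ i, φ (c i) := by
  set T : Set (Fin N) := {i | w i ≠ c i}
  have hslope : AntitoneOn (fun i => slope φ (w i) (c i)) T := fun i hi j hj hij =>
    hφ.slope_le_slope (hws j) (hcs j) (hws i) (hcs i) hj hi (hw hij) (hc hij)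
  -- where `w i = c i` the slope is irrelevant, so any antitone extension will do
  obtain ⟨g, hg, hgT⟩ := hslope.exists_antitone_extension (T.toFinite.image _).bddBelow
    (T.toFinite.image _).bddAbove
  have key : ∀ i, φ (c i) - φ (w i) = g i * (c i - w i) := fun i => by
    by_cases hi : i ∈ T
    · rw [← hgT hi, mul_comm]
      exact (sub_smul_slope φ (w i) (c i)).symm
    · simp_all [T]
  have habel := Fin.sum_mul_nonneg_of_antitone hg (d := fun i => c i - w i)
    (fun k => by simpa [sum_sub_distrib] using hwc k) (by simp [sum_sub_distrib, hsum])
  simp only [← key, sum_sub_distrib] at habel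
  linarith

theorem ConvexOn.sum_le_sum_of_forall_sum_le {s : Set ℝ} {φ : ℝ → ℝ} (hφ : ConvexOn ℝ s φ)
    {N : ℕ} {x c : Fin N → ℝ} (hc : Antitone c) (hxs : ∀ i, x i ∈ s) (hcs : ∀ i, c i ∈ s)
    (hxc : ∀ (k : Fin N) (S : Finset (Fin N)), #S = k + 1 → ∑ i ∈ S, x i ≤ ∑ i ∈ Iic k, c i)
    (hsum : ∑ i, x i = ∑ i, c i) : ∑ i, φ (x i) ≤ ∑ i, φ (c i) := by
  set σ := Tuple.sort (-x)
  have hw : Antitone (x ∘ σ) := fun i j hij => neg_le_neg_iff.mp (Tuple.monotone_sort (-x) hij)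
  have hwc : ∀ k, ∑ i ∈ Iic k, x (σ i) ≤ ∑ i ∈ Iic k, c i := fun k => by
    simpa [sum_map] using hxc k ((Iic k).map σ.toEmbedding) (by simp)
  rw [← Equiv.sum_comp σ] at hsum ⊢
  exact hφ.sum_le_sum_of_antitone hw hc (fun i => hxs _) hcs hwc hsum

theorem Antitone.sum_max_sub_eq_sum_Iic {n : ℕ} {f : Fin n → ℝ} (hf : Antitone f) (k : Fin n) :
    ∑ j, max (f j - f k) 0 = ∑ j ∈ Iic k, (f j - f k) := by
  rw [← sum_subset (subset_univ (Iic k)) fun j _ hj =>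
    max_eq_right (sub_nonpos.2 (hf (le_of_lt (by simpa using hj))))]
  exact sum_congr rfl fun j hj => max_eq_left (sub_nonneg.2 (hf (mem_Iic.1 hj)))

theorem Submodule.exists_mem_inf_ne_zero_of_finrank_lt {K V : Type*} [DivisionRing K]
    [AddCommGroup V] [Module K V] [FiniteDimensional K V] {W W' : Submodule K V}
    (h : finrank K V < finrank K W + finrank K W') : ∃ x ∈ W ⊓ W', x ≠ 0 := by
  refine exists_mem_ne_zero_of_ne_bot fun hbot => h.not_ge ?_
  rw [← finrank_sup_add_finrank_inf_eq, hbot, finrank_bot, add_zero]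
  exact Submodule.finrank_le _

section Eigenbasis

variable {𝕜 E ι : Type*} [RCLike 𝕜] [NormedAddCommGroup E] [InnerProductSpace 𝕜 E] [Fintype ι]

namespace OrthonormalBasis

variable (u : OrthonormalBasis ι 𝕜 E)

theorem finrank_span_image (s : Finset ι) : finrank 𝕜 (span 𝕜 (u '' s)) = #s := by
  rw [Set.image_eq_range]
  exact (finrank_span_eq_card (u.orthonormal.linearIndependent.comp _ Subtype.val_injective)).trans
    (by simp)

theorem inner_eq_zero_of_mem_span_image {s : Set ι} {x : E} (hx : x ∈ span 𝕜 (u '' s)) {i : ι}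
    (hi : i ∉ s) : ⟪u i, x⟫_𝕜 = 0 := by
  rw [← mem_orthogonal_singleton_iff_inner_right]
  refine span_le.mpr ?_ hx
  rintro _ ⟨j, hj, rfl⟩
  exact mem_orthogonal_singleton_iff_inner_right.mpr (u.orthonormal.2 fun h => hi (h ▸ hj))

theorem sum_mul_norm_sq_inner_le_of_mem_span_image {s : Set ι} {x : E}
    (hx : x ∈ span 𝕜 (u '' s)) {a b : ι → ℝ} (hab : ∀ i ∈ s, a i ≤ b i) :
    ∑ i, a i * ‖⟪u i, x⟫_𝕜‖ ^ 2 ≤ ∑ i, b i * ‖⟪u i, x⟫_𝕜‖ ^ 2 := by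
  refine sum_le_sum fun i _ => ?_
  by_cases hi : i ∈ s
  · exact mul_le_mul_of_nonneg_right (hab i hi) (by positivity)
  · simp [u.inner_eq_zero_of_mem_span_image hx hi]

end OrthonormalBasis

def IsEigenbasis (T : E →ₗ[𝕜] E) (u : OrthonormalBasis ι 𝕜 E) (lam : ι → ℝ) : Prop :=
  ∀ i, T (u i) = (lam i : 𝕜) • u i

theorem OrthonormalBasis.exists_isEigenbasis (u : OrthonormalBasis ι 𝕜 E) (lam : ι → ℝ) :
    ∃ T, IsEigenbasis T u lam := by
  classical
  refine ⟨∑ i, (lam i : 𝕜) • (InnerProductSpace.rankOne 𝕜 (u i) (u i) : E →ₗ[𝕜] E), fun j => ?_⟩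
  simp [u.inner_eq_ite]

namespace IsEigenbasis

variable {T : E →ₗ[𝕜] E} {u : OrthonormalBasis ι 𝕜 E} {lam : ι → ℝ}

theorem inner_apply (hT : IsEigenbasis T u lam) (i : ι) (x : E) :
    ⟪u i, T x⟫_𝕜 = lam i * ⟪u i, x⟫_𝕜 := by
  classical
  conv_lhs => rw [← u.sum_repr' x]
  simp [map_sum, hT _, inner_sum, inner_smul_right, u.inner_eq_ite, mul_comm]

theorem isSymmetric (hT : IsEigenbasis T u lam) : T.IsSymmetric := fun x y => by
  rw [← u.sum_inner_mul_inner, ← u.sum_inner_mul_inner x]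
  refine sum_congr rfl fun i _ => ?_
  rw [← inner_conj_symm, hT.inner_apply, ← inner_conj_symm (u i) x, hT.inner_apply]
  simp only [map_mul, RCLike.conj_ofReal, RingHomCompTriple.comp_apply, RingHom.id_apply]
  ring

theorem re_inner_self_apply (hT : IsEigenbasis T u lam) (x : E) :
    RCLike.re ⟪x, T x⟫_𝕜 = ∑ i, lam i * ‖⟪u i, x⟫_𝕜‖ ^ 2 := by
  rw [← u.sum_inner_mul_inner, map_sum]
  refine sum_congr rfl fun i _ => ?_
  rw [hT.inner_apply, ← inner_conj_symm, mul_left_comm, RCLike.conj_mul]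
  norm_cast

theorem re_trace [FiniteDimensional 𝕜 E] (hT : IsEigenbasis T u lam) :
    RCLike.re (LinearMap.trace 𝕜 E T) = ∑ i, lam i := by
  rw [LinearMap.trace_eq_sum_inner T u, map_sum]
  simp [hT.inner_apply]

/-- Courant–Fischer: the span of the top `k + 1` eigenvectors of `T` meets the span of the bottom
`n - k` eigenvectors of `T'`. -/
theorem le_add_of_re_inner_le {n : ℕ} (hn : finrank 𝕜 E = n) {T' : E →ₗ[𝕜] E}
    {u u' : OrthonormalBasis (Fin n) 𝕜 E} {lam lam' : Fin n → ℝ} (hT : IsEigenbasis T u lam)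
    (hT' : IsEigenbasis T' u' lam') (hlam : Antitone lam) (hlam' : Antitone lam') {t : ℝ}
    (h : ∀ x, RCLike.re ⟪x, T x⟫_𝕜 ≤ RCLike.re ⟪x, T' x⟫_𝕜 + t * ‖x‖ ^ 2) (k : Fin n) :
    lam k ≤ lam' k + t := by
  have : FiniteDimensional 𝕜 E := u.toBasis.finiteDimensional_of_finite
  obtain ⟨x, hx, hx0⟩ := exists_mem_inf_ne_zero_of_finrank_lt (W := span 𝕜 (u '' (Iic k)))
    (W' := span 𝕜 (u' '' (Ici k))) (by
      rw [u.finrank_span_image, u'.finrank_span_image, Fin.card_Iic, Fin.card_Ici]; omega)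
  have hlow : lam k * ‖x‖ ^ 2 ≤ RCLike.re ⟪x, T x⟫_𝕜 := by
    rw [← u.sum_sq_norm_inner_right, mul_sum, hT.re_inner_self_apply]
    exact u.sum_mul_norm_sq_inner_le_of_mem_span_image hx.1 fun i hi => hlam (by simpa using hi)
  have hup : RCLike.re ⟪x, T' x⟫_𝕜 ≤ lam' k * ‖x‖ ^ 2 := by
    rw [← u'.sum_sq_norm_inner_right, mul_sum, hT'.re_inner_self_apply]
    exact u'.sum_mul_norm_sq_inner_le_of_mem_span_image hx.2 fun i hi => hlam' (by simpa using hi)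
  have hpos : 0 < ‖x‖ ^ 2 := by positivity
  nlinarith [h x]

theorem sum_le_sum_add_sum_Iic {n : ℕ} (hn : finrank 𝕜 E = n) {X Y : E →ₗ[𝕜] E}
    {uX uY uZ : OrthonormalBasis (Fin n) 𝕜 E} {lamX lamY lamZ : Fin n → ℝ}
    (hX : IsEigenbasis X uX lamX) (hY : IsEigenbasis Y uY lamY)
    (hZ : IsEigenbasis (X + Y) uZ lamZ) (hlamX : Antitone lamX) (hlamY : Antitone lamY)
    (hlamZ : Antitone lamZ) (k : Fin n) (S : Finset (Fin n)) (hS : #S = k + 1) :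
    ∑ i ∈ S, lamZ i ≤ ∑ i ∈ S, lamX i + ∑ j ∈ Iic k, lamY j := by
  have : FiniteDimensional 𝕜 E := uX.toBasis.finiteDimensional_of_finite
  set t := lamY k
  obtain ⟨P, hP⟩ := uY.exists_isEigenbasis fun j => max (lamY j - t) 0
  have hW : (X + P).IsSymmetric := hX.isSymmetric.add hP.isSymmetric
  have hWe : IsEigenbasis (X + P) (hW.eigenvectorBasis hn) (hW.eigenvalues hn) :=
    hW.apply_eigenvectorBasis hn
  set lamW := hW.eigenvalues hn
  have hYP : ∀ x, RCLike.re ⟪x, Y x⟫_𝕜 ≤ RCLike.re ⟪x, P x⟫_𝕜 + t * ‖x‖ ^ 2 := fun x => by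
    rw [hY.re_inner_self_apply, hP.re_inner_self_apply, ← uY.sum_sq_norm_inner_right, mul_sum,
      ← sum_add_distrib]
    refine sum_le_sum fun j _ => ?_
    nlinarith [le_max_left (lamY j - t) 0, sq_nonneg ‖⟪uY j, x⟫_𝕜‖]
  have hP0 : ∀ x, 0 ≤ RCLike.re ⟪x, P x⟫_𝕜 := fun x => by
    rw [hP.re_inner_self_apply]
    exact sum_nonneg fun j _ => by positivity
  have hZW : ∀ i, lamZ i ≤ lamW i + t :=
    hZ.le_add_of_re_inner_le hn hWe hlamZ (hW.eigenvalues_antitone hn) fun x => by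
      simp only [LinearMap.add_apply, inner_add_right, map_add]
      linarith [hYP x]
  have hXW : ∀ i, lamX i ≤ lamW i + 0 :=
    hX.le_add_of_re_inner_le hn hWe hlamX (hW.eigenvalues_antitone hn) fun x => by
      simp only [LinearMap.add_apply, inner_add_right, map_add]
      linarith [hP0 x]
  have htrace : ∑ i, (lamW i - lamX i) = ∑ j ∈ Iic k, (lamY j - t) := by
    rw [sum_sub_distrib, ← hWe.re_trace, ← hX.re_trace, map_add, map_add, add_sub_cancel_left,
      hP.re_trace, hlamY.sum_max_sub_eq_sum_Iic]
  have hS_le : ∑ i ∈ S, (lamW i - lamX i) ≤ ∑ i, (lamW i - lamX i) :=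
    sum_le_sum_of_subset_of_nonneg (subset_univ S) fun i _ _ => by linarith [hXW i]
  have hZS : ∑ i ∈ S, lamZ i ≤ ∑ i ∈ S, (lamW i + t) := sum_le_sum fun i _ => hZW i
  simp only [sum_add_distrib, sum_sub_distrib, sum_const, hS, Fin.card_Iic, nsmul_eq_mul]
    at hS_le hZS htrace
  push_cast at hZS htrace
  linarith

end IsEigenbasis

end Eigenbasis

namespace IsOrderedSpectrum

variable {n : ℕ} {M : Matrix (Fin n) (Fin n) ℂ} {hM : M.IsHermitian} {lam : Fin n → ℝ}

theorem exists_isEigenbasis (hl : IsOrderedSpectrum M hM lam) :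
    ∃ u, IsEigenbasis (toEuclideanLin M) u lam := by
  obtain ⟨σ, hσ⟩ := hl.2
  refine ⟨hM.eigenvectorBasis.reindex σ.symm, fun i => ?_⟩
  ext j
  simp [hσ, hM.mulVec_eigenvectorBasis]

theorem nonneg (hM' : M.PosSemidef) (hl : IsOrderedSpectrum M hM lam) (i : Fin n) :
    0 ≤ lam i := by
  obtain ⟨σ, hσ⟩ := hl.2
  exact hσ i ▸ hM'.eigenvalues_nonneg (σ i)

theorem eq_zero_of_rank_le (hM' : M.PosSemidef) (hl : IsOrderedSpectrum M hM lam) {r : ℕ}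
    (hr : M.rank ≤ r) (i : Fin n) (hi : r ≤ i) : lam i = 0 := by
  obtain ⟨σ, hσ⟩ := hl.2
  by_contra hne
  have hpos : 0 < lam i := (hl.nonneg hM' i).lt_of_ne' hne
  have hcard : #(Iic i) ≤ M.rank := by
    rw [hM.rank_eq_card_non_zero_eigs, ← Fintype.card_coe]
    refine Fintype.card_le_of_injective (fun j => ⟨σ j, ?_⟩) fun a b h => ?_
    · rw [← hσ]; exact (hpos.trans_le (hl.1 (mem_Iic.1 j.2))).ne'
    · exact Subtype.ext (σ.injective (congrArg Subtype.val h))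
  rw [Fin.card_Iic] at hcard
  omega

variable {A B : Matrix (Fin n) (Fin n) ℂ} {hA : A.IsHermitian} {hB : B.IsHermitian}
  {hAB : (A + B).IsHermitian} {lamA lamB lamAB : Fin n → ℝ}

theorem sum_add (hlA : IsOrderedSpectrum A hA lamA) (hlB : IsOrderedSpectrum B hB lamB)
    (hlAB : IsOrderedSpectrum (A + B) hAB lamAB) :
    ∑ j, lamAB j = ∑ j, lamA j + ∑ j, lamB j := by
  obtain ⟨uA, huA⟩ := hlA.exists_isEigenbasis
  obtain ⟨uB, huB⟩ := hlB.exists_isEigenbasis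
  obtain ⟨uAB, huAB⟩ := hlAB.exists_isEigenbasis
  rw [← huA.re_trace, ← huB.re_trace, ← huAB.re_trace, map_add, map_add, map_add]

/-- The eigenbasis of `A` in reverse order is one of `-A` with antitone eigenvalues
`-λ_{n-i+1}(A)`, so this is `IsEigenbasis.sum_le_sum_add_sum_Iic` for `B = (-A) + (A + B)`. -/
theorem sum_rev_add_le_sum_Iic (hlA : IsOrderedSpectrum A hA lamA)
    (hlB : IsOrderedSpectrum B hB lamB) (hlAB : IsOrderedSpectrum (A + B) hAB lamAB) (k : Fin n)
    (S : Finset (Fin n)) (hS : #S = k + 1) :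
    ∑ i ∈ S, (lamA i.rev + lamB i) ≤ ∑ j ∈ Iic k, lamAB j := by
  obtain ⟨uA, huA⟩ := hlA.exists_isEigenbasis
  obtain ⟨uB, huB⟩ := hlB.exists_isEigenbasis
  obtain ⟨uAB, huAB⟩ := hlAB.exists_isEigenbasis
  have hnegA : IsEigenbasis (-toEuclideanLin A) (uA.reindex Fin.revPerm)
      (fun i => -lamA i.rev) := fun i => by simp [huA _]
  rw [map_add] at huAB
  have huB' : IsEigenbasis (-toEuclideanLin A + (toEuclideanLin A + toEuclideanLin B)) uB lamB :=
    by rwa [neg_add_cancel_left]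
  have := hnegA.sum_le_sum_add_sum_Iic finrank_euclideanSpace_fin huAB huB'
    (fun i j h => neg_le_neg (hlA.1 (Fin.rev_le_rev.2 h))) hlAB.1 hlB.1 k S hS
  simp only [sum_neg_distrib, sum_add_distrib] at this ⊢
  linarith

end IsOrderedSpectrum

theorem lidskii_rank_convex_general {n r : ℕ}
    (A B : Matrix (Fin n) (Fin n) ℂ) (hA : A.PosSemidef) (hB : B.PosSemidef)
    (hrk : B.rank ≤ r)
    (φ : ℝ → ℝ) (hφ : ConvexOn ℝ (Set.Ici 0) φ)
    (lamA lamB lamAB : Fin n → ℝ)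
    (hlA : IsOrderedSpectrum A hA.1 lamA)
    (hlB : IsOrderedSpectrum B hB.1 lamB)
    (hlAB : IsOrderedSpectrum (A + B) (hA.add hB).1 lamAB) :
    ∑ j : Fin n, φ (lamA j.rev + if (j : ℕ) < r then lamB j else 0)
      ≤ ∑ j : Fin n, φ (lamAB j) := by
  have hrank : ∀ j : Fin n, (if (j : ℕ) < r then lamB j else 0) = lamB j := fun j => by
    split_ifs with hj
    · rfl
    · exact (hlB.eq_zero_of_rank_le hB hrk j (not_lt.1 hj)).symm
  have htrace : ∑ j, (lamA j.rev + lamB j) = ∑ j, lamAB j := by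
    rw [sum_add_distrib, hlA.sum_add hlB hlAB]
    exact congrArg (· + _) (Equiv.sum_comp Fin.revPerm lamA)
  simp only [hrank]
  exact hφ.sum_le_sum_of_forall_sum_le hlAB.1
    (fun j => add_nonneg (hlA.nonneg hA _) (hlB.nonneg hB _)) (hlAB.nonneg (hA.add hB))
    (hlA.sum_rev_add_le_sum_Iic hlB hlAB) htrace

/-- Lidskii's inequality combined with a rank constraint:
`Σ_{j=1}^{r} φ(λ_{n−j+1}(A) + λ_j(B)) + Σ_{j=r+1}^{n} φ(λ_{n−j+1}(A))
  ≤ Σ_{j=1}^{n} φ(λ_j(A+B))`. -/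
theorem lidskii_rank_convex {n r : ℕ} (hr : r ≤ n)
    (A B : Matrix (Fin n) (Fin n) ℂ) (hA : A.PosSemidef) (hB : B.PosSemidef)
    (hrk : B.rank ≤ r)
    (φ : ℝ → ℝ) (hφ : ConvexOn ℝ (Set.Ici 0) φ) (hφ0 : ∀ t, 0 ≤ t → 0 ≤ φ t)
    (lamA lamB lamAB : Fin n → ℝ)
    (hlA : IsOrderedSpectrum A hA.1 lamA)
    (hlB : IsOrderedSpectrum B hB.1 lamB)
    (hlAB : IsOrderedSpectrum (A + B) (hA.add hB).1 lamAB) :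
    ∑ j : Fin n, φ (lamA j.rev + if (j : ℕ) < r then lamB j else 0)
      ≤ ∑ j : Fin n, φ (lamAB j) :=
  lidskii_rank_convex_general A B hA hB hrk φ hφ lamA lamB lamAB hlA hlB hlAB
end
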